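/- arXiv:2412.16029 — 8 statements merged into one kernel-verified Lean document; each statement's English description precedes it below -/
import Mathlib

section
/- Let A be a finite alphabet and let A* be the set of finite words on A, viewed as vertices of the rooted word-tree T_A (where the distance between two words u, v is length(u) + length(v) − 2·length(LCA(u,v)), LCA being the longest common prefix). If w, w' ∈ A* are distinct words with d_{T_A}(w, w') ≤ k, then either the suffixes of length k of w and w' are distinct (where a word of length < k is considered together with its full content, i.e. the last min(k, length) letters padded appropriately differ), or the last k digits of the base-10 expansions of length(w) and length(w') are distinct. -/
/-- Length of the longest common prefix of two lists. -/
def lcpLen {A : Type*} [DecidableEq A] : List A → List A → ℕ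
  | a :: as, b :: bs => if a = b then lcpLen as bs + 1 else 0
  | _, _ => 0

/-- The word-tree metric: d(u,v) = length u + length v − 2·(length of longest common prefix). -/
def treeDist {A : Type*} [DecidableEq A] (u v : List A) : ℕ :=
  u.length + v.length - 2 * lcpLen u v

lemma lcpLen_le_left {A : Type*} [DecidableEq A] : ∀ u v : List A, lcpLen u v ≤ u.length
  | [], _ => by simp [lcpLen]
  | _ :: _, [] => by simp [lcpLen]
  | a :: as, b :: bs => by
    simp only [lcpLen, List.length_cons]
    split
    · exact Nat.succ_le_succ (lcpLen_le_left as bs)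
    · omega

lemma lcpLen_le_right {A : Type*} [DecidableEq A] : ∀ u v : List A, lcpLen u v ≤ v.length
  | [], _ => by simp [lcpLen]
  | _ :: _, [] => by simp [lcpLen]
  | a :: as, b :: bs => by
    simp only [lcpLen, List.length_cons]
    split
    · exact Nat.succ_le_succ (lcpLen_le_right as bs)
    · omega

lemma take_lcpLen_eq {A : Type*} [DecidableEq A] :
    ∀ u v : List A, u.take (lcpLen u v) = v.take (lcpLen u v)
  | [], _ => by simp [lcpLen]
  | _ :: _, [] => by simp [lcpLen]
  | a :: as, b :: bs => by
    simp only [lcpLen]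
    split
    · next h => simp [h, take_lcpLen_eq as bs]
    · simp

/-- if w ≠ w' are words with d_{T_A}(w,w') ≤ k, then either their suffixes of
length k differ, or the last k digits of the base-10 expansions of their lengths differ. -/
theorem stmt_1 {A : Type*} [DecidableEq A] [Fintype A] (k : ℕ) (w w' : List A)
    (hne : w ≠ w') (hd : treeDist w w' ≤ k) :
    w.reverse.take k ≠ w'.reverse.take k ∨
    w.length % 10 ^ k ≠ w'.length % 10 ^ k := by
  by_contra hcon
  push_neg at hcon
  obtain ⟨h1, h2⟩ := hcon
  apply hne
  set n := w.length with hn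
  set n' := w'.length with hn'
  set l := lcpLen w w' with hl
  have hle1 : l ≤ n := lcpLen_le_left w w'
  have hle2 : l ≤ n' := lcpLen_le_right w w'
  have hdist : n + n' - 2 * l ≤ k := hd
  have hk10 : k < 10 ^ k := Nat.lt_pow_self (by norm_num : 1 < 10)
  -- lengths are equal
  have hnn : n = n' := by
    rcases le_total n n' with h | h
    · rcases Nat.eq_zero_or_pos (n' - n) with h0 | hpos
      · omega
      · have hb := Nat.le_of_dvd hpos ((Nat.modEq_iff_dvd' h).mp h2)
        omega
    · rcases Nat.eq_zero_or_pos (n - n') with h0 | hpos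
      · omega
      · have hb := Nat.le_of_dvd hpos ((Nat.modEq_iff_dvd' h).mp h2.symm)
        omega
  by_cases hkn : n ≤ k
  · -- take k takes everything
    have e1 : w.reverse.take k = w.reverse := List.take_of_length_le (by simpa using hkn)
    have e2 : w'.reverse.take k = w'.reverse := List.take_of_length_le (by simp; omega)
    have : w.reverse = w'.reverse := by rw [← e1, ← e2, h1]
    exact List.reverse_injective this
  · push_neg at hkn
    have hlk : n - k ≤ l := by omega
    have hpre : w.take (n - k) = w'.take (n - k) := by
      have := congrArg (List.take (n - k)) (take_lcpLen_eq w w')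
      simpa [List.take_take, Nat.min_eq_left hlk, ← hl] using this
    have hsuf : w.reverse.drop k = w'.reverse.drop k := by
      rw [List.drop_reverse, List.drop_reverse, ← hn, ← hn', ← hnn, hpre]
    have : w.reverse = w'.reverse := by
      rw [← List.take_append_drop k w.reverse, ← List.take_append_drop k w'.reverse, h1, hsuf]
    exact List.reverse_injective this
end

section
/- Alice's Diary lemma 1: Suppose all days' inputs are starred words (words beginning with the special letter ⋆ and containing no other ⋆). If the i-th chapter v_i of Alice's Diary AD_κ applied to a starred sentence ⋆u₁ … ⋆u_m has the form v_i = u ⋆ v where u contains no ⋆, then u_i equals the reversal of u. -/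
/-- One run of Alice's greedy diary: `stack` is the list of not-yet-recorded letters,
most recent first.  Each day the new word's letters are pushed (most recent first) and
Alice records the top κ letters of the stack as that day's chapter. -/
def ADaux {A : Type*} (κ : ℕ) : List A → List (List A) → List (List A)
  | _, [] => []
  | stack, w :: ws =>
      ((w.reverse ++ stack).take κ) :: ADaux κ ((w.reverse ++ stack).drop κ) ws

/-- Alice's Diary AD_κ: sends a sentence (list of words) to the sentence of chapters. -/
def AD {A : Type*} (κ : ℕ) (α : List (List A)) : List (List A) := ADaux κ [] α

/-- The sentence in which each letter is replaced by its coordinates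
(day index, distance-from-end − 1). -/
def tagged {A : Type*} (α : List (List A)) : List (List (ℕ × ℕ)) :=
  α.mapIdx (fun i w => (List.range w.length).reverse.map (fun e => (i, e)))

/-- The coordinates of the letter recorded on page k of chapter j of Alice's Diary of α. -/
def pageAt {A : Type*} (κ : ℕ) (α : List (List A)) (j k : ℕ) : Option (ℕ × ℕ) :=
  (((AD κ (tagged α))[j]?).getD [])[k]?

/-- The letter of day i at distance e+1 from the end of its word is recorded somewhere
in Alice's Diary of α. -/
def recorded {A : Type*} (κ : ℕ) (α : List (List A)) (i e : ℕ) : Prop :=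
  ∃ j k : ℕ, pageAt κ α j k = some (i, e)

/-- A starred word: starts with ⋆ and contains no other ⋆. -/
def StarredWord {A : Type*} (star : A) (w : List A) : Prop :=
  ∃ u, w = star :: u ∧ star ∉ u

/-- A starred sentence: all constituent words are starred. -/
def StarredSentence {A : Type*} (star : A) (α : List (List A)) : Prop :=
  ∀ w ∈ α, StarredWord star w


lemma prefix_star {A : Type*} (star : A) : ∀ (u a v b : List A), star ∉ u → star ∉ a →
    (u ++ star :: v) <+: (a ++ star :: b) → u = a := by
  intro u
  induction u with
  | nil =>
    intro a v b _ ha h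
    cases a with
    | nil => rfl
    | cons x a' =>
      obtain ⟨t, ht⟩ := h
      simp only [List.nil_append, List.cons_append, List.cons.injEq] at ht
      exact absurd (ht.1 ▸ (List.mem_cons_self : x ∈ x :: a')) ha
  | cons x u' ih =>
    intro a v b hu ha h
    cases a with
    | nil =>
      obtain ⟨t, ht⟩ := h
      simp only [List.cons_append, List.nil_append, List.cons.injEq] at ht
      exact absurd (ht.1 ▸ (List.mem_cons_self : x ∈ x :: u')) hu
    | cons y a' =>
      obtain ⟨t, ht⟩ := h
      simp only [List.cons_append, List.cons.injEq] at ht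
      have := ih a' v b (fun hm => hu (List.mem_cons_of_mem _ hm))
        (fun hm => ha (List.mem_cons_of_mem _ hm)) ⟨t, ht.2⟩
      rw [ht.1, this]

lemma adaux_main {A : Type*} (star : A) (κ : ℕ) :
    ∀ (ws : List (List A)) (stack : List A) (i : ℕ) (u v : List A),
    (∀ w ∈ ws, StarredWord star w) → star ∉ u →
    (ADaux κ stack ws)[i]? = some (u ++ star :: v) →
    ws[i]? = some (star :: u.reverse) := by
  intro ws
  induction ws with
  | nil => intro stack i u v _ _ h; simp [ADaux] at h
  | cons w ws ih =>
    intro stack i u v hst hu h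
    cases i with
    | zero =>
      simp only [ADaux, List.getElem?_cons_zero, Option.some.injEq] at h
      obtain ⟨u0, hw, hu0⟩ := hst w (by simp)
      have hpre : (u ++ star :: v) <+: (w.reverse ++ stack) := h ▸ List.take_prefix κ _
      rw [hw] at hpre
      have hpre' : (u ++ star :: v) <+: (u0.reverse ++ star :: stack) := by
        simpa using hpre
      have heq : u = u0.reverse := prefix_star star u u0.reverse v stack hu
        (by simpa using hu0) hpre'
      simp [hw, heq]
    | succ n =>
      simp only [ADaux, List.getElem?_cons_succ] at h
      rw [List.getElem?_cons_succ]
      exact ih _ n u v (fun w hw => hst w (by simp [hw])) hu h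

/-- Alice's Diary lemma 1: if all inputs are starred words and the i-th
chapter of AD_κ(α) has the form u ⋆ v with u free of ⋆, then the i-th word of α is
⋆ followed by the reversal of u. -/
theorem stmt_8 {A : Type*} [DecidableEq A] (star : A) (κ : ℕ) (α : List (List A))
    (hα : StarredSentence star α)
    (i : ℕ) (u v : List A) (hu : star ∉ u)
    (hch : (AD κ α)[i]? = some (u ++ star :: v)) :
    α[i]? = some (star :: u.reverse) := by
  exact adaux_main star κ α [] i u v hα hu hch
end

section
/- Alice's Diary lemma 2: Let α = ⋆u₁…⋆u_m and β = ⋆u'₁…⋆u'_n be starred sentences with AD_κ(α) = AD_κ(β) (so in particular m = n). If the word ⋆u_i has length at most κ, then u'_i = u_i; symmetrically, if ⋆u'_j has length at most κ then u_j = u'_j. -/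
/-- Extracting a short starred word from the top of a chapter. -/
lemma take_chapter {A : Type*} (star : A) (u s : List A) (κ : ℕ)
    (hlen : u.length + 1 ≤ κ) :
    (((star :: u).reverse ++ s).take κ).take (u.length + 1) = u.reverse ++ [star] := by
  rw [List.take_take, min_eq_left hlen, List.reverse_cons, List.take_left']
  simp

/-- If two chapters coincide and the first comes from a short starred word,
the second word is the same. -/
lemma key_lemma {A : Type*} (star : A) (u u' s s' : List A) (κ : ℕ)
    (hu : star ∉ u) (hu' : star ∉ u') (hlen : u.length + 1 ≤ κ)
    (h : ((star :: u).reverse ++ s).take κ = ((star :: u').reverse ++ s').take κ) :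
    u' = u := by
  have hstar : star ∈ ((star :: u).reverse ++ s).take κ := by
    apply List.mem_of_mem_take (i := u.length + 1)
    rw [take_chapter star u s κ hlen]
    simp
  have hlen' : u'.length + 1 ≤ κ := by
    by_contra hc
    push_neg at hc
    have hκ : κ ≤ u'.reverse.length := by simpa using Nat.lt_succ_iff.mp hc
    rw [h] at hstar
    rw [List.reverse_cons, List.append_assoc, List.take_append_of_le_length hκ] at hstar
    exact hu' (by simpa using List.mem_of_mem_take hstar)
  have h1 := take_chapter star u s κ hlen
  have h2 := take_chapter star u' s' κ hlen'
  rw [h] at h1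
  -- now h1 : (RHS).take (u.length+1) = u.reverse ++ [star]
  -- and h2 : (RHS).take (u'.length+1) = u'.reverse ++ [star]
  have key : ∀ (v v' : List A), star ∉ v' → v.length ≤ v'.length →
      (v'.reverse ++ [star]).take (v.length + 1) = v.reverse ++ [star] → v' = v := by
    intro v v' hv' hle heq
    rcases eq_or_lt_of_le hle with heqlen | hlt
    · rw [show v.length + 1 = (v'.reverse ++ [star]).length by simp [heqlen],
        List.take_length] at heq
      have := List.append_inj_left' heq (by simp)
      simpa using congrArg List.reverse this
    · have hle2 : v.length + 1 ≤ v'.reverse.length := by simpa using hlt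
      rw [List.take_append_of_le_length hle2] at heq
      exfalso
      apply hv'
      have : star ∈ v'.reverse.take (v.length + 1) := by rw [heq]; simp
      simpa using List.mem_of_mem_take this
  rcases le_total u.length u'.length with hle | hle
  · refine key u u' hu' hle ?_
    rw [← h2, List.take_take, min_eq_left (by omega)]
    exact h1
  · refine (key u' u hu hle ?_).symm
    rw [← h1, List.take_take, min_eq_left (by omega)]
    exact h2

lemma ADaux_length {A : Type*} (κ : ℕ) :
    ∀ (α : List (List A)) (s : List A), (ADaux κ s α).length = α.length := by
  intro α
  induction α with
  | nil => intro s; simp [ADaux]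
  | cons w ws ih => intro s; simp [ADaux, ih]

lemma ADaux_main {A : Type*} (star : A) (κ : ℕ) :
    ∀ (α β : List (List A)) (s s' : List A),
      StarredSentence star α → StarredSentence star β →
      ADaux κ s α = ADaux κ s' β →
      ∀ (i : ℕ) (w : List A), α[i]? = some w → w.length ≤ κ → β[i]? = some w := by
  intro α
  induction α with
  | nil => intro β s s' _ _ _ i w hw; simp at hw
  | cons w ws ih =>
    intro β s s' hα hβ hAD i v hv hvlen
    cases β with
    | nil => simp [ADaux] at hAD
    | cons w' ws' =>
      rw [ADaux, ADaux, List.cons_eq_cons] at hAD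
      obtain ⟨h1, h2⟩ := hAD
      cases i with
      | zero =>
        simp only [List.getElem?_cons_zero, Option.some.injEq] at hv
        subst hv
        obtain ⟨u, hwu, hu⟩ := hα w (by simp)
        obtain ⟨u', hwu', hu'⟩ := hβ w' (by simp)
        subst hwu hwu'
        have : u' = u := by
          apply key_lemma star u u' s s' κ hu hu' (by simpa using hvlen)
          exact h1
        simp [this]
      | succ n =>
        simp only [List.getElem?_cons_succ] at hv ⊢
        exact ih ws' _ _ (fun x hx => hα x (List.mem_cons_of_mem _ hx))
          (fun x hx => hβ x (List.mem_cons_of_mem _ hx)) h2 n v hv hvlen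

/-- Alice's Diary lemma 2: if two starred sentences have the same diary,
then they have the same number of words, and any word of length ≤ κ of one sentence
coincides with the corresponding word of the other. -/
theorem stmt_9 {A : Type*} [DecidableEq A] (star : A) (κ : ℕ) (α β : List (List A))
    (hα : StarredSentence star α) (hβ : StarredSentence star β)
    (hAD : AD κ α = AD κ β) :
    α.length = β.length ∧
    (∀ (i : ℕ) (w : List A), α[i]? = some w → w.length ≤ κ → β[i]? = some w) ∧
    (∀ (j : ℕ) (w' : List A), β[j]? = some w' → w'.length ≤ κ → α[j]? = some w') := by
  refine ⟨?_, ?_, ?_⟩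
  · have h := congrArg List.length hAD
    rwa [AD, AD, ADaux_length, ADaux_length] at h
  · exact ADaux_main star κ α β [] [] hα hβ hAD
  · exact ADaux_main star κ β α [] [] hβ hα hAD.symm
end

section
/- Alice's Diary recording theorem: Let α = ⋆u₁…⋆u_m and β = ⋆u'₁…⋆u'_m be starred sentences with AD_κ(α) = AD_κ(β). Suppose a is a letter of ⋆u_i and a' is a letter of ⋆u'_i such that (1) a and a' are at the same distance from the ends of their words, and (2) both a and a' are recorded somewhere in the respective diaries. Then there exist i ≤ j ≤ m and 1 ≤ k ≤ κ such that a and a' appear on page k of chapters v_j and v'_j respectively; consequently a = a' as letters of A. -/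
section Infra
variable {A X : Type*}

lemma glA {l l' : List X} {n : ℕ} (h : n < l.length) : (l ++ l')[n]? = l[n]? := by
  simp [List.getElem?_append, h]

lemma glA' (l l' : List X) (n : ℕ) : (l ++ l')[l.length + n]? = l'[n]? := by
  rw [List.getElem?_append_right (by omega)]; congr 1; omega

lemma glT {l : List X} {n m : ℕ} (h : m < n) : (l.take n)[m]? = l[m]? := by
  simp [List.getElem?_take, h]

lemma ADaux_map (κ : ℕ) (f : X → A) :
    ∀ (ws : List (List X)) (S : List X),
      ADaux κ (S.map f) (ws.map (List.map f)) = (ADaux κ S ws).map (List.map f)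
  | [], S => rfl
  | w :: ws, S => by
      simp only [ADaux, List.map_cons, ← List.map_reverse, ← List.map_append,
        ← List.map_take, ← List.map_drop]
      rw [ADaux_map κ f ws]

/-- valuation recovering letters from coordinates -/
def fval (star : A) (α : List (List A)) (p : ℕ × ℕ) : A :=
  ((α.getD p.1 []).reverse).getD p.2 star

lemma map_range_getD (L : List A) (d : A) :
    (List.range L.length).map (fun e => L.getD e d) = L := by
  apply List.ext_getElem
  · simp
  · intro n h1 h2
    simp [List.getD_eq_getElem?_getD, List.getElem?_eq_getElem h2]

lemma tagged_getElem? (α : List (List A)) (n : ℕ) (hn : n < α.length) :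
    (tagged α)[n]? = some ((List.range (α[n].length)).reverse.map (fun e => (n, e))) := by
  unfold tagged
  rw [List.getElem?_eq_getElem (by simpa using hn)]
  simp

lemma tagged_map (star : A) (α : List (List A)) :
    (tagged α).map (List.map (fval star α)) = α := by
  apply List.ext_getElem
  · simp [tagged]
  · intro n h1 h2
    have := tagged_getElem? α n h2
    have h3 : ((tagged α).map (List.map (fval star α)))[n]? =
        some (((List.range (α[n].length)).reverse.map (fun e => (n, e))).map (fval star α)) := by
      rw [List.getElem?_map, this]; rfl
    rw [List.getElem?_eq_getElem (by simpa [tagged] using h2)] at h3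
    have hgd : α.getD n [] = α[n] := by
      rw [List.getD_eq_getElem?_getD, List.getElem?_eq_getElem h2]; rfl
    have hf : (fval star α ∘ fun e => (n, e)) = (fun e => α[n].reverse.getD e star) := by
      funext e; simp [fval, hgd, List.getElem?_eq_getElem h2]
    have h4 : ((List.range (α[n].length)).reverse.map (fun e => (n, e))).map (fval star α)
        = α[n] := by
      rw [List.map_map, List.map_reverse, hf]
      have hL := map_range_getD (α[n].reverse) star
      rw [List.length_reverse] at hL
      rw [hL, List.reverse_reverse]
    simp only [h4] at h3
    exact Option.some_injective _ h3

end Infra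

section Core
variable {A X : Type*}

lemma memg {l : List X} {p : ℕ} {x : X} (h : l[p]? = some x) : x ∈ l :=
  List.mem_iff_getElem?.2 ⟨p, h⟩

/-- A word whose head maps to star and no other letter does. -/
def Starry (star : A) (f : X → A) (w : List X) : Prop :=
  ∃ y u, w = y :: u ∧ f y = star ∧ ∀ z ∈ u, f z ≠ star

lemma Starry.pos {star : A} {f : X → A} {w : List X} (h : Starry star f w) : 0 < w.length := by
  obtain ⟨y, u, rfl, -, -⟩ := h; simp

lemma Starry.rev {star : A} {f : X → A} {w : List X} (h : Starry star f w)
    {q : ℕ} (hq : q < w.length) :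
    ∃ z, w.reverse[q]? = some z ∧ (f z = star ↔ q = w.length - 1) := by
  obtain ⟨y, u, rfl, hy, hu⟩ := h
  have hrev : (y :: u).reverse = u.reverse ++ [y] := by simp
  rcases Nat.lt_or_ge q u.length with hlt | hge
  · have h1 : (u.reverse ++ [y])[q]? = u.reverse[q]? := glA (by simpa using hlt)
    have h2 : ∃ z, u.reverse[q]? = some z := by
      rw [List.getElem?_eq_getElem (by simpa using hlt)]; exact ⟨_, rfl⟩
    obtain ⟨z, hz⟩ := h2
    refine ⟨z, by rw [hrev, h1, hz], ?_⟩
    have hzu : z ∈ u := by have := memg hz; simpa using this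
    simp only [List.length_cons]
    constructor
    · intro hs; exact absurd hs (hu z hzu)
    · intro hq'; omega
  · have hqe : q = u.length := by simp only [List.length_cons] at hq; omega
    subst hqe
    have h1 : (u.reverse ++ [y])[u.length]? = some y := by
      have := glA' u.reverse [y] 0
      simpa using this
    exact ⟨y, by rw [hrev, h1], by simp [hy]⟩

/-- equal mapped chapters give pointwise letter equality -/
lemma page_eq {κ : ℕ} {f g : X → A} {U V : List X}
    (Hc : (U.take κ).map f = (V.take κ).map g)
    {k : ℕ} (hk : k < κ) {ya za : X} (h1 : U[k]? = some ya) (h2 : V[k]? = some za) :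
    f ya = g za := by
  have := congrArg (fun l => l[k]?) Hc
  simp only [List.getElem?_map, glT hk, h1, h2, Option.map_some] at this
  exact Option.some_injective _ this

/-- if the two pushed words have different lengths, κ must be small -/
lemma clash_aux {star : A} {κ : ℕ} {f g : X → A} {w v : List X} {S T : List X}
    (Hc : ((w.reverse ++ S).take κ).map f = ((v.reverse ++ T).take κ).map g)
    (hw : Starry star f w) (hv : Starry star g v) (hne : w.length ≠ v.length) :
    κ < min w.length v.length := by
  by_contra hκ
  push_neg at hκ
  set M := min w.length v.length with hM
  have hMw : M ≤ w.length := Nat.min_le_left _ _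
  have hMv : M ≤ v.length := Nat.min_le_right _ _
  have hM1 : 1 ≤ M := le_min hw.pos hv.pos
  obtain ⟨z1, hz1, hfz1⟩ := hw.rev (q := M - 1) (by omega)
  obtain ⟨z2, hz2, hgz2⟩ := hv.rev (q := M - 1) (by omega)
  have h1 : (w.reverse ++ S)[M-1]? = some z1 := by
    rw [glA (by simp; omega)]; exact hz1
  have h2 : (v.reverse ++ T)[M-1]? = some z2 := by
    rw [glA (by simp; omega)]; exact hz2
  have := page_eq Hc (k := M - 1) (by omega) h1 h2
  have hone : (M - 1 = w.length - 1) ↔ ¬ (M - 1 = v.length - 1) := by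
    constructor
    · intro h h'; omega
    · intro h'; omega
  rcases Classical.em (M - 1 = w.length - 1) with h | h
  · have := hfz1.2 h
    have h2' := hone.1 h
    have : f z1 = star := hfz1.2 h
    rw [‹f z1 = g z2›] at this
    exact h2' (hgz2.1 this)
  · have hvv : M - 1 = v.length - 1 := by omega
    have : g z2 = star := hgz2.2 hvv
    rw [← ‹f z1 = g z2›] at this
    exact h (hfz1.1 this)

end Core

section CoreB
variable {A X : Type*}

lemma ADaux_ne_nil {κ : ℕ} {T : List X} {vs : List (List X)}
    (h : (ADaux κ T vs).map (List.map (fun _ : X => True)) = []) : vs = [] := by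
  cases vs with
  | nil => rfl
  | cons v vs => simp [ADaux] at h

lemma lt_of_take_g? {l : List X} {κ q : ℕ} {x : X} (h : (l.take κ)[q]? = some x) : q < κ := by
  by_contra hc
  rw [List.getElem?_eq_none (by
    have : (l.take κ).length = min κ l.length := List.length_take
    omega)] at h
  cases h

lemma coreB (star : A) (κ : ℕ) (f g : X → A) (x : X) :
    ∀ (ws vs : List (List X)) (S T : List X) (b : ℕ) (yb zb : X),
      (ADaux κ S ws).map (List.map f) = (ADaux κ T vs).map (List.map g) →
      (∀ w ∈ ws, Starry star f w) → (∀ w ∈ vs, Starry star g w) →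
      S[b]? = some yb → T[b]? = some zb → f yb ≠ g zb →
      (∀ p, S[p]? = some x → b < p) → (∀ p, T[p]? = some x → b < p) →
      x ∉ ws.flatten → x ∉ vs.flatten →
      x ∉ ((ADaux κ S ws).flatten) ∧ x ∉ ((ADaux κ T vs).flatten)
  | [], vs, S, T, b, yb, zb, H1, _, _, hSb, hTb, hne, hSx, hTx, hwx, hvx => by
      have hvs : vs = [] := by
        cases vs with
        | nil => rfl
        | cons v vs' => simp [ADaux] at H1
      subst hvs; simp [ADaux]
  | w :: ws, vs, S, T, b, yb, zb, H1, hstf, hstg, hSb, hTb, hne, hSx, hTx, hwx, hvx => by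
      obtain ⟨v, vs, rfl⟩ : ∃ v vs', vs = v :: vs' := by
        cases vs with
        | nil => simp [ADaux] at H1
        | cons v vs' => exact ⟨v, vs', rfl⟩
      set U := w.reverse ++ S with hU
      set V := v.reverse ++ T with hV
      simp only [ADaux, List.map_cons, List.cons.injEq] at H1
      obtain ⟨Hc, Htl⟩ := H1
      have hwS : Starry star f w := hstf w (by simp)
      have hvS : Starry star g v := hstg v (by simp)
      have hstf' : ∀ w' ∈ ws, Starry star f w' := fun w' h => hstf w' (by simp [h])
      have hstg' : ∀ v' ∈ vs, Starry star g v' := fun v' h => hstg v' (by simp [h])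
      have hwx' : x ∉ ws.flatten := fun h => hwx (by simp [h])
      have hvx' : x ∉ vs.flatten := fun h => hvx (by simp [h])
      have hxw : x ∉ w := fun h => hwx (by simp [h])
      have hxv : x ∉ v := fun h => hvx (by simp [h])
      -- helper : occurrences of x in U are exactly S-occurrences shifted
      have hUx : ∀ q, U[q]? = some x → w.length + b < q := by
        intro q hq
        rcases Nat.lt_or_ge q w.length with h | h
        · rw [hU, glA (by simpa using h)] at hq
          exact absurd (by simpa using memg hq) hxw
        · have : U[q]? = S[q - w.length]? := by
            rw [hU, List.getElem?_append_right (by simpa using h)]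
            simp
          rw [this] at hq
          have := hSx _ hq
          omega
      have hVx : ∀ q, V[q]? = some x → v.length + b < q := by
        intro q hq
        rcases Nat.lt_or_ge q v.length with h | h
        · rw [hV, glA (by simpa using h)] at hq
          exact absurd (by simpa using memg hq) hxv
        · have : V[q]? = T[q - v.length]? := by
            rw [hV, List.getElem?_append_right (by simpa using h)]
            simp
          rw [this] at hq
          have := hTx _ hq
          omega
      rcases Classical.em (w.length = v.length) with hlen | hlen
      · -- equal push lengths : barrier moves to w.length + b
        have hUb : U[w.length + b]? = some yb := by
          rw [hU]
          have := glA' w.reverse S b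
          rw [List.length_reverse] at this
          rw [this]; exact hSb
        have hVb : V[w.length + b]? = some zb := by
          rw [hV, hlen]
          have := glA' v.reverse T b
          rw [List.length_reverse] at this
          rw [this]; exact hTb
        rcases Nat.lt_or_ge (w.length + b) κ with hk | hk
        · exact absurd (page_eq Hc hk hUb hVb) hne
        · -- barrier survives
          have ih := coreB star κ f g x ws vs (U.drop κ) (V.drop κ) (w.length + b - κ)
            yb zb Htl hstf' hstg'
            (by rw [List.getElem?_drop]; rw [show κ + (w.length + b - κ) = w.length + b by omega]
                exact hUb)
            (by rw [List.getElem?_drop]; rw [show κ + (w.length + b - κ) = w.length + b by omega]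
                exact hVb)
            hne
            (by intro p hp
                rw [List.getElem?_drop] at hp
                have := hUx _ hp; omega)
            (by intro p hp
                rw [List.getElem?_drop] at hp
                have := hVx _ hp; omega)
            hwx' hvx'
          constructor
          · intro hmem
            simp only [ADaux, List.flatten_cons, List.mem_append] at hmem
            rcases hmem with h | h
            · obtain ⟨q, hq⟩ := List.mem_iff_getElem?.1 h
              have hqκ : q < κ := lt_of_take_g? hq
              rw [glT hqκ] at hq
              have := hUx _ hq; omega
            · exact ih.1 h
          · intro hmem
            simp only [ADaux, List.flatten_cons, List.mem_append] at hmem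
            rcases hmem with h | h
            · obtain ⟨q, hq⟩ := List.mem_iff_getElem?.1 h
              have hqκ : q < κ := lt_of_take_g? hq
              rw [glT hqκ] at hq
              have := hVx _ hq; omega
            · exact ih.2 h
      · -- unequal push lengths : new barrier
        have hκM := clash_aux Hc hwS hvS hlen
        set M := min w.length v.length with hM
        have hMw : M ≤ w.length := Nat.min_le_left _ _
        have hMv : M ≤ v.length := Nat.min_le_right _ _
        have hM1 : 1 ≤ M := le_min hwS.pos hvS.pos
        obtain ⟨z1, hz1, hfz1⟩ := hwS.rev (q := M - 1) (by omega)
        obtain ⟨z2, hz2, hgz2⟩ := hvS.rev (q := M - 1) (by omega)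
        have hUb : U[M-1]? = some z1 := by rw [hU, glA (by simp; omega)]; exact hz1
        have hVb : V[M-1]? = some z2 := by rw [hV, glA (by simp; omega)]; exact hz2
        have hzz : f z1 ≠ g z2 := by
          intro hE
          rcases Classical.em (M - 1 = w.length - 1) with h | h
          · have : f z1 = star := hfz1.2 h
            rw [hE] at this
            have := hgz2.1 this
            omega
          · rcases Classical.em (M - 1 = v.length - 1) with h' | h'
            · have : g z2 = star := hgz2.2 h'
              rw [← hE] at this
              exact h (hfz1.1 this)
            · omega
        have ih := coreB star κ f g x ws vs (U.drop κ) (V.drop κ) (M - 1 - κ)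
          z1 z2 Htl hstf' hstg'
          (by rw [List.getElem?_drop, show κ + (M - 1 - κ) = M - 1 by omega]; exact hUb)
          (by rw [List.getElem?_drop, show κ + (M - 1 - κ) = M - 1 by omega]; exact hVb)
          hzz
          (by intro p hp
              rw [List.getElem?_drop] at hp
              have := hUx _ hp; omega)
          (by intro p hp
              rw [List.getElem?_drop] at hp
              have := hVx _ hp; omega)
          hwx' hvx'
        constructor
        · intro hmem
          simp only [ADaux, List.flatten_cons, List.mem_append] at hmem
          rcases hmem with h | h
          · obtain ⟨q, hq⟩ := List.mem_iff_getElem?.1 h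
            have hqκ : q < κ := lt_of_take_g? hq
            rw [glT hqκ] at hq
            have := hUx _ hq; omega
          · exact ih.1 h
        · intro hmem
          simp only [ADaux, List.flatten_cons, List.mem_append] at hmem
          rcases hmem with h | h
          · obtain ⟨q, hq⟩ := List.mem_iff_getElem?.1 h
            have hqκ : q < κ := lt_of_take_g? hq
            rw [glT hqκ] at hq
            have := hVx _ hq; omega
          · exact ih.2 h

end CoreB

section CoreA
variable {A X : Type*}

lemma coreA (star : A) (κ : ℕ) (f g : X → A) (x : X) :
    ∀ (ws vs : List (List X)) (S T : List X) (p : ℕ),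
      (ADaux κ S ws).map (List.map f) = (ADaux κ T vs).map (List.map g) →
      (∀ w ∈ ws, Starry star f w) → (∀ w ∈ vs, Starry star g w) →
      S[p]? = some x → T[p]? = some x →
      (∀ p', S[p']? = some x → p' = p) → (∀ p', T[p']? = some x → p' = p) →
      x ∉ ws.flatten → x ∉ vs.flatten →
      (∃ j k : ℕ, k < κ ∧ (((ADaux κ S ws)[j]?.getD [])[k]? = some x)
        ∧ (((ADaux κ T vs)[j]?.getD [])[k]? = some x))
      ∨ (x ∉ (ADaux κ S ws).flatten ∧ x ∉ (ADaux κ T vs).flatten)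
  | [], vs, S, T, p, H1, _, _, hSp, hTp, hSu, hTu, hwx, hvx => by
      have hvs : vs = [] := by
        cases vs with
        | nil => rfl
        | cons v vs' => simp [ADaux] at H1
      subst hvs; right; simp [ADaux]
  | w :: ws, vs, S, T, p, H1, hstf, hstg, hSp, hTp, hSu, hTu, hwx, hvx => by
      obtain ⟨v, vs, rfl⟩ : ∃ v vs', vs = v :: vs' := by
        cases vs with
        | nil => simp [ADaux] at H1
        | cons v vs' => exact ⟨v, vs', rfl⟩
      set U := w.reverse ++ S with hU
      set V := v.reverse ++ T with hV
      simp only [ADaux, List.map_cons, List.cons.injEq] at H1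
      obtain ⟨Hc, Htl⟩ := H1
      have hwS : Starry star f w := hstf w (by simp)
      have hvS : Starry star g v := hstg v (by simp)
      have hstf' : ∀ w' ∈ ws, Starry star f w' := fun w' h => hstf w' (by simp [h])
      have hstg' : ∀ v' ∈ vs, Starry star g v' := fun v' h => hstg v' (by simp [h])
      have hwx' : x ∉ ws.flatten := fun h => hwx (by simp [h])
      have hvx' : x ∉ vs.flatten := fun h => hvx (by simp [h])
      have hxw : x ∉ w := fun h => hwx (by simp [h])
      have hxv : x ∉ v := fun h => hvx (by simp [h])
      have hUp : U[w.length + p]? = some x := by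
        rw [hU]
        have := glA' w.reverse S p
        rw [List.length_reverse] at this
        rw [this]; exact hSp
      have hVp : V[v.length + p]? = some x := by
        rw [hV]
        have := glA' v.reverse T p
        rw [List.length_reverse] at this
        rw [this]; exact hTp
      have hUx : ∀ q, U[q]? = some x → q = w.length + p := by
        intro q hq
        rcases Nat.lt_or_ge q w.length with h | h
        · rw [hU, glA (by simpa using h)] at hq
          exact absurd (by simpa using memg hq) hxw
        · have : U[q]? = S[q - w.length]? := by
            rw [hU, List.getElem?_append_right (by simpa using h)]; simp
          rw [this] at hq
          have := hSu _ hq; omega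
      have hVx : ∀ q, V[q]? = some x → q = v.length + p := by
        intro q hq
        rcases Nat.lt_or_ge q v.length with h | h
        · rw [hV, glA (by simpa using h)] at hq
          exact absurd (by simpa using memg hq) hxv
        · have : V[q]? = T[q - v.length]? := by
            rw [hV, List.getElem?_append_right (by simpa using h)]; simp
          rw [this] at hq
          have := hTu _ hq; omega
      rcases Classical.em (w.length = v.length) with hlen | hlen
      · rcases Nat.lt_or_ge (w.length + p) κ with hk | hk
        · -- popped today, same page
          left
          refine ⟨0, w.length + p, hk, ?_, ?_⟩
          · simp only [ADaux, List.getElem?_cons_zero, Option.getD_some]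
            rw [glT hk]; exact hUp
          · simp only [ADaux, List.getElem?_cons_zero, Option.getD_some]
            rw [glT hk, hlen]; exact hVp
        · -- survives at synced position
          have ih := coreA star κ f g x ws vs (U.drop κ) (V.drop κ) (w.length + p - κ)
            Htl hstf' hstg'
            (by rw [List.getElem?_drop, show κ + (w.length + p - κ) = w.length + p by omega]
                exact hUp)
            (by rw [List.getElem?_drop,
                  show κ + (w.length + p - κ) = v.length + p by omega]
                exact hVp)
            (by intro p' hp'
                rw [List.getElem?_drop] at hp'
                have := hUx _ hp'; omega)
            (by intro p' hp'
                rw [List.getElem?_drop] at hp'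
                have := hVx _ hp'; omega)
            hwx' hvx'
          rcases ih with ⟨j, k, hkκ, h1, h2⟩ | ⟨h1, h2⟩
          · left
            refine ⟨j + 1, k, hkκ, ?_, ?_⟩
            · simp only [ADaux, List.getElem?_cons_succ]
              exact h1
            · simp only [ADaux, List.getElem?_cons_succ]
              exact h2
          · right
            constructor
            · intro hmem
              simp only [ADaux, List.flatten_cons, List.mem_append] at hmem
              rcases hmem with h | h
              · obtain ⟨q, hq⟩ := List.mem_iff_getElem?.1 h
                have hqκ : q < κ := lt_of_take_g? hq
                rw [glT hqκ] at hq
                have := hUx _ hq; omega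
              · exact h1 h
            · intro hmem
              simp only [ADaux, List.flatten_cons, List.mem_append] at hmem
              rcases hmem with h | h
              · obtain ⟨q, hq⟩ := List.mem_iff_getElem?.1 h
                have hqκ : q < κ := lt_of_take_g? hq
                rw [glT hqκ] at hq
                have := hVx _ hq; omega
              · exact h2 h
      · -- unequal push lengths : barrier forms below x in both
        have hκM := clash_aux Hc hwS hvS hlen
        set M := min w.length v.length with hM
        have hMw : M ≤ w.length := Nat.min_le_left _ _
        have hMv : M ≤ v.length := Nat.min_le_right _ _
        have hM1 : 1 ≤ M := le_min hwS.pos hvS.pos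
        obtain ⟨z1, hz1, hfz1⟩ := hwS.rev (q := M - 1) (by omega)
        obtain ⟨z2, hz2, hgz2⟩ := hvS.rev (q := M - 1) (by omega)
        have hUb : U[M-1]? = some z1 := by rw [hU, glA (by simp; omega)]; exact hz1
        have hVb : V[M-1]? = some z2 := by rw [hV, glA (by simp; omega)]; exact hz2
        have hzz : f z1 ≠ g z2 := by
          intro hE
          rcases Classical.em (M - 1 = w.length - 1) with h | h
          · have : f z1 = star := hfz1.2 h
            rw [hE] at this
            have := hgz2.1 this
            omega
          · rcases Classical.em (M - 1 = v.length - 1) with h' | h'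
            · have : g z2 = star := hgz2.2 h'
              rw [← hE] at this
              exact h (hfz1.1 this)
            · omega
        have ihB := coreB star κ f g x ws vs (U.drop κ) (V.drop κ) (M - 1 - κ)
          z1 z2 Htl hstf' hstg'
          (by rw [List.getElem?_drop, show κ + (M - 1 - κ) = M - 1 by omega]; exact hUb)
          (by rw [List.getElem?_drop, show κ + (M - 1 - κ) = M - 1 by omega]; exact hVb)
          hzz
          (by intro p' hp'
              rw [List.getElem?_drop] at hp'
              have := hUx _ hp'; omega)
          (by intro p' hp'
              rw [List.getElem?_drop] at hp'
              have := hVx _ hp'; omega)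
          hwx' hvx'
        right
        constructor
        · intro hmem
          simp only [ADaux, List.flatten_cons, List.mem_append] at hmem
          rcases hmem with h | h
          · obtain ⟨q, hq⟩ := List.mem_iff_getElem?.1 h
            have hqκ : q < κ := lt_of_take_g? hq
            rw [glT hqκ] at hq
            have := hUx _ hq; omega
          · exact ihB.1 h
        · intro hmem
          simp only [ADaux, List.flatten_cons, List.mem_append] at hmem
          rcases hmem with h | h
          · obtain ⟨q, hq⟩ := List.mem_iff_getElem?.1 h
            have hqκ : q < κ := lt_of_take_g? hq
            rw [glT hqκ] at hq
            have := hVx _ hq; omega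
          · exact ihB.2 h

end CoreA

section CoreF
variable {A X : Type*}

lemma lt_of_g? {l : List X} {n : ℕ} {x : X} (h : l[n]? = some x) : n < l.length := by
  by_contra hc
  rw [List.getElem?_eq_none (by omega)] at h
  cases h

lemma coreF (star : A) (κ : ℕ) (f g : X → A) (x : X) (e' : ℕ) :
    ∀ (r : ℕ) (ws vs : List (List X)) (S T : List X),
      (ADaux κ S ws).map (List.map f) = (ADaux κ T vs).map (List.map g) →
      (∀ w ∈ ws, Starry star f w) → (∀ w ∈ vs, Starry star g w) →
      (∀ n w', ws[n]? = some w' → x ∈ w' → n = r) →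
      (∀ n v', vs[n]? = some v' → x ∈ v' → n = r) →
      (∀ e'', ((ws[r]?.getD []).reverse)[e'']? = some x → e'' = e') →
      (∀ e'', ((vs[r]?.getD []).reverse)[e'']? = some x → e'' = e') →
      ((ws[r]?.getD []).reverse)[e']? = some x →
      ((vs[r]?.getD []).reverse)[e']? = some x →
      x ∉ S → x ∉ T →
      (∃ j k : ℕ, k < κ ∧ (((ADaux κ S ws)[j]?.getD [])[k]? = some x)
        ∧ (((ADaux κ T vs)[j]?.getD [])[k]? = some x))
      ∨ (x ∉ (ADaux κ S ws).flatten ∧ x ∉ (ADaux κ T vs).flatten) := by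
  intro r
  induction r with
  | zero =>
      intro ws vs S T H1 hstf hstg hnw hnv hew hev hxw0 hxv0 hxS hxT
      obtain ⟨w, ws, rfl⟩ : ∃ w ws', ws = w :: ws' := by
        cases ws with
        | nil => simp at hxw0
        | cons w ws' => exact ⟨w, ws', rfl⟩
      obtain ⟨v, vs, rfl⟩ : ∃ v vs', vs = v :: vs' := by
        cases vs with
        | nil => simp [ADaux] at H1
        | cons v vs' => exact ⟨v, vs', rfl⟩
      simp only [List.getElem?_cons_zero, Option.getD_some] at hxw0 hxv0 hew hev
      set U := w.reverse ++ S with hU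
      set V := v.reverse ++ T with hV
      simp only [ADaux, List.map_cons, List.cons.injEq] at H1
      obtain ⟨Hc, Htl⟩ := H1
      have hstf' : ∀ w' ∈ ws, Starry star f w' := fun w' h => hstf w' (by simp [h])
      have hstg' : ∀ v' ∈ vs, Starry star g v' := fun v' h => hstg v' (by simp [h])
      have hwx' : x ∉ ws.flatten := by
        intro h
        obtain ⟨w'', hw'', hx''⟩ := List.mem_flatten.1 h
        obtain ⟨n, hn⟩ := List.mem_iff_getElem?.1 hw''
        have : n + 1 = 0 := hnw (n+1) w'' (by simpa using hn) hx''
        omega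
      have hvx' : x ∉ vs.flatten := by
        intro h
        obtain ⟨v'', hv'', hx''⟩ := List.mem_flatten.1 h
        obtain ⟨n, hn⟩ := List.mem_iff_getElem?.1 hv''
        have : n + 1 = 0 := hnv (n+1) v'' (by simpa using hn) hx''
        omega
      have he'w : e' < w.length := by simpa using lt_of_g? hxw0
      have he'v : e' < v.length := by simpa using lt_of_g? hxv0
      have hUp : U[e']? = some x := by
        rw [hU, glA (by simpa using he'w)]; exact hxw0
      have hVp : V[e']? = some x := by
        rw [hV, glA (by simpa using he'v)]; exact hxv0
      have hUx : ∀ q, U[q]? = some x → q = e' := by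
        intro q hq
        rcases Nat.lt_or_ge q w.length with h | h
        · rw [hU, glA (by simpa using h)] at hq
          exact hew q hq
        · have : U[q]? = S[q - w.length]? := by
            rw [hU, List.getElem?_append_right (by simpa using h)]; simp
          rw [this] at hq
          exact absurd (memg hq) hxS
      have hVx : ∀ q, V[q]? = some x → q = e' := by
        intro q hq
        rcases Nat.lt_or_ge q v.length with h | h
        · rw [hV, glA (by simpa using h)] at hq
          exact hev q hq
        · have : V[q]? = T[q - v.length]? := by
            rw [hV, List.getElem?_append_right (by simpa using h)]; simp
          rw [this] at hq
          exact absurd (memg hq) hxT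
      rcases Nat.lt_or_ge e' κ with hk | hk
      · left
        refine ⟨0, e', hk, ?_, ?_⟩
        · simp only [ADaux, List.getElem?_cons_zero, Option.getD_some]
          rw [glT hk]; exact hUp
        · simp only [ADaux, List.getElem?_cons_zero, Option.getD_some]
          rw [glT hk]; exact hVp
      · have ih := coreA star κ f g x ws vs (U.drop κ) (V.drop κ) (e' - κ)
          Htl hstf' hstg'
          (by rw [List.getElem?_drop, show κ + (e' - κ) = e' by omega]; exact hUp)
          (by rw [List.getElem?_drop, show κ + (e' - κ) = e' by omega]; exact hVp)
          (by intro p' hp'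
              rw [List.getElem?_drop] at hp'
              have := hUx _ hp'; omega)
          (by intro p' hp'
              rw [List.getElem?_drop] at hp'
              have := hVx _ hp'; omega)
          hwx' hvx'
        rcases ih with ⟨j, k, hkκ, h1, h2⟩ | ⟨h1, h2⟩
        · left
          refine ⟨j + 1, k, hkκ, ?_, ?_⟩
          · simp only [ADaux, List.getElem?_cons_succ]
            exact h1
          · simp only [ADaux, List.getElem?_cons_succ]
            exact h2
        · right
          constructor
          · intro hmem
            simp only [ADaux, List.flatten_cons, List.mem_append] at hmem
            rcases hmem with h | h
            · obtain ⟨q, hq⟩ := List.mem_iff_getElem?.1 h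
              have hqκ : q < κ := lt_of_take_g? hq
              rw [glT hqκ] at hq
              have := hUx _ hq; omega
            · exact h1 h
          · intro hmem
            simp only [ADaux, List.flatten_cons, List.mem_append] at hmem
            rcases hmem with h | h
            · obtain ⟨q, hq⟩ := List.mem_iff_getElem?.1 h
              have hqκ : q < κ := lt_of_take_g? hq
              rw [glT hqκ] at hq
              have := hVx _ hq; omega
            · exact h2 h
  | succ r IH =>
      intro ws vs S T H1 hstf hstg hnw hnv hew hev hxw0 hxv0 hxS hxT
      obtain ⟨w, ws, rfl⟩ : ∃ w ws', ws = w :: ws' := by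
        cases ws with
        | nil => simp at hxw0
        | cons w ws' => exact ⟨w, ws', rfl⟩
      obtain ⟨v, vs, rfl⟩ : ∃ v vs', vs = v :: vs' := by
        cases vs with
        | nil => simp [ADaux] at H1
        | cons v vs' => exact ⟨v, vs', rfl⟩
      set U := w.reverse ++ S with hU
      set V := v.reverse ++ T with hV
      simp only [ADaux, List.map_cons, List.cons.injEq] at H1
      obtain ⟨Hc, Htl⟩ := H1
      have hstf' : ∀ w' ∈ ws, Starry star f w' := fun w' h => hstf w' (by simp [h])
      have hstg' : ∀ v' ∈ vs, Starry star g v' := fun v' h => hstg v' (by simp [h])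
      have hxw : x ∉ w := by
        intro h
        have : (0 : ℕ) = r + 1 := hnw 0 w (by simp) h
        omega
      have hxv : x ∉ v := by
        intro h
        have : (0 : ℕ) = r + 1 := hnv 0 v (by simp) h
        omega
      have hxU : x ∉ U := by
        rw [hU]
        intro h
        rcases List.mem_append.1 h with h | h
        · exact hxw (by simpa using h)
        · exact hxS h
      have hxV : x ∉ V := by
        rw [hV]
        intro h
        rcases List.mem_append.1 h with h | h
        · exact hxv (by simpa using h)
        · exact hxT h
      have ih := IH ws vs (U.drop κ) (V.drop κ) Htl hstf' hstg'
        (fun n w' hn hx => by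
          have := hnw (n+1) w' (by simpa using hn) hx
          omega)
        (fun n v' hn hx => by
          have := hnv (n+1) v' (by simpa using hn) hx
          omega)
        (by simpa only [List.getElem?_cons_succ] using hew)
        (by simpa only [List.getElem?_cons_succ] using hev)
        (by simpa only [List.getElem?_cons_succ] using hxw0)
        (by simpa only [List.getElem?_cons_succ] using hxv0)
        (fun h => hxU (List.mem_of_mem_drop h))
        (fun h => hxV (List.mem_of_mem_drop h))
      rcases ih with ⟨j, k, hkκ, h1, h2⟩ | ⟨h1, h2⟩
      · left
        refine ⟨j + 1, k, hkκ, ?_, ?_⟩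
        · simp only [ADaux, List.getElem?_cons_succ]
          exact h1
        · simp only [ADaux, List.getElem?_cons_succ]
          exact h2
      · right
        constructor
        · intro hmem
          simp only [ADaux, List.flatten_cons, List.mem_append] at hmem
          rcases hmem with h | h
          · exact hxU (List.mem_of_mem_take h)
          · exact h1 h
        · intro hmem
          simp only [ADaux, List.flatten_cons, List.mem_append] at hmem
          rcases hmem with h | h
          · exact hxV (List.mem_of_mem_take h)
          · exact h2 h

end CoreF

section Final
variable {A X : Type*}

lemma page_mem {D : List (List X)} {j k : ℕ} {x : X}
    (h : ((D[j]?.getD [])[k]? = some x)) : x ∈ D.flatten := by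
  cases hD : D[j]? with
  | none => rw [hD] at h; simp at h
  | some c =>
      rw [hD] at h
      simp only [Option.getD_some] at h
      exact List.mem_flatten.2 ⟨c, memg hD, memg h⟩

lemma mapped_page {D : List (List X)} (f : X → A) {j k : ℕ} {x : X}
    (h : ((D[j]?.getD [])[k]? = some x)) :
    (((D.map (List.map f))[j]?.getD [])[k]? = some (f x)) := by
  cases hD : D[j]? with
  | none => rw [hD] at h; simp at h
  | some c =>
      rw [hD] at h
      simp only [Option.getD_some] at h
      rw [List.getElem?_map, hD]
      simp only [Option.map_some, Option.getD_some, List.getElem?_map, h]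

lemma daybound (κ : ℕ) : ∀ (ws : List (List X)) (S : List X) (j k : ℕ) (y : X),
    (((ADaux κ S ws)[j]?.getD [])[k]? = some y) →
    y ∈ S ∨ ∃ n, n ≤ j ∧ ∃ w', ws[n]? = some w' ∧ y ∈ w'
  | [], S, j, k, y => by simp [ADaux]
  | w :: ws, S, j, k, y => by
      cases j with
      | zero =>
          intro h
          simp only [ADaux, List.getElem?_cons_zero, Option.getD_some] at h
          have hy : y ∈ w.reverse ++ S := List.mem_of_mem_take (memg h)
          rcases List.mem_append.1 hy with h' | h'
          · exact Or.inr ⟨0, le_refl 0, w, by simp, by simpa using h'⟩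
          · exact Or.inl h'
      | succ j =>
          intro h
          simp only [ADaux, List.getElem?_cons_succ] at h
          rcases daybound κ ws ((w.reverse ++ S).drop κ) j k y h with h' | ⟨n, hn, w', hw', hy⟩
          · have hy : y ∈ w.reverse ++ S := List.mem_of_mem_drop h'
            rcases List.mem_append.1 hy with h'' | h''
            · exact Or.inr ⟨0, by omega, w, by simp, by simpa using h''⟩
            · exact Or.inl h''
          · exact Or.inr ⟨n + 1, by omega, w', by simpa using hw', hy⟩

lemma starry_tagged (star : A) {α : List (List A)} (hα : StarredSentence star α) :
    ∀ w' ∈ tagged α, Starry star (fval star α) w' := by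
  intro w' hw'
  obtain ⟨n, hn⟩ := List.mem_iff_getElem?.1 hw'
  have hnl : n < α.length := by
    have := lt_of_g? hn
    simpa [tagged] using this
  rw [tagged_getElem? α n hnl] at hn
  have hword := hα α[n] (List.getElem_mem hnl)
  obtain ⟨u, hu, hstar⟩ := hword
  have hgd : α.getD n [] = α[n] := by
    rw [List.getD_eq_getElem?_getD, List.getElem?_eq_getElem hnl]; rfl
  have hlen : α[n].length = u.length + 1 := by rw [hu]; simp
  have hrev : α[n].reverse = u.reverse ++ [star] := by rw [hu]; simp
  have hw'' : w' = (n, u.length) :: ((List.range u.length).reverse.map (fun e => (n, e))) := by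
    have := Option.some_injective _ hn
    rw [← this, hlen, List.range_succ]
    simp
  refine ⟨(n, u.length), _, hw'', ?_, ?_⟩
  · show fval star α (n, u.length) = star
    simp only [fval, hgd, hrev]
    rw [List.getD_eq_getElem?_getD]
    have := glA' u.reverse [star] 0
    simp only [List.length_reverse, Nat.add_zero] at this
    rw [this]
    rfl
  · intro z hz
    obtain ⟨e, he, rfl⟩ := List.mem_map.1 hz
    have helt : e < u.length := by simpa using he
    show fval star α (n, e) ≠ star
    simp only [fval, hgd, hrev]
    rw [List.getD_eq_getElem?_getD, glA (by simpa using helt),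
      List.getElem?_eq_getElem (by simpa using helt)]
    intro hcon
    simp only [Option.getD_some] at hcon
    apply hstar
    rw [← hcon]
    have h5 : e < u.reverse.length := by simpa using helt
    simpa using List.getElem_mem h5

end Final

/-- Alice's Diary recording theorem: if two starred sentences have equal
diaries, and letters a (in the i-th word of α) and a' (in the i-th word of β), at the same
distance e+1 from the ends of their words, are both recorded, then they are recorded on
the same page k < κ of the same chapter j ≥ i, and consequently a = a'. -/
theorem stmt_10 {A : Type*} [DecidableEq A] (star : A) (κ : ℕ) (α β : List (List A))
    (hα : StarredSentence star α) (hβ : StarredSentence star β)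
    (hAD : AD κ α = AD κ β)
    (i e : ℕ) (wa wb : List A) (hwa : α[i]? = some wa) (hwb : β[i]? = some wb)
    (a a' : A) (ha : wa.reverse[e]? = some a) (ha' : wb.reverse[e]? = some a')
    (hreca : recorded κ α i e) (hrecb : recorded κ β i e) :
    (∃ j k : ℕ, i ≤ j ∧ k < κ ∧
      pageAt κ α j k = some (i, e) ∧ pageAt κ β j k = some (i, e)) ∧
    a = a' := by
  set f := fval star α with hf
  set g := fval star β with hg
  have hiα : i < α.length := lt_of_g? hwa
  have hiβ : i < β.length := lt_of_g? hwb
  have hαi : α[i] = wa := by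
    have := hwa; rw [List.getElem?_eq_getElem hiα] at this
    exact Option.some_injective _ this
  have hβi : β[i] = wb := by
    have := hwb; rw [List.getElem?_eq_getElem hiβ] at this
    exact Option.some_injective _ this
  have heα : e < wa.length := by have := lt_of_g? ha; simpa using this
  have heβ : e < wb.length := by have := lt_of_g? ha'; simpa using this
  -- naturality
  have e1 : (ADaux κ [] (tagged α)).map (List.map f) = AD κ α := by
    have h1 := ADaux_map κ f (tagged α) []
    simp only [List.map_nil] at h1
    rw [tagged_map star α] at h1
    rw [← h1]; rfl
  have e2 : (ADaux κ [] (tagged β)).map (List.map g) = AD κ β := by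
    have h1 := ADaux_map κ g (tagged β) []
    simp only [List.map_nil] at h1
    rw [tagged_map star β] at h1
    rw [← h1]; rfl
  have H1 : (ADaux κ [] (tagged α)).map (List.map f)
      = (ADaux κ [] (tagged β)).map (List.map g) := by
    rw [e1, e2]; exact hAD
  -- coordinates of the letter inside the tagged words
  have tgα : (tagged α)[i]? = some ((List.range wa.length).reverse.map (fun e' => (i, e'))) := by
    rw [tagged_getElem? α i hiα, hαi]
  have tgβ : (tagged β)[i]? = some ((List.range wb.length).reverse.map (fun e' => (i, e'))) := by
    rw [tagged_getElem? β i hiβ, hβi]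
  have wrevα : ((tagged α)[i]?.getD []).reverse = (List.range wa.length).map (fun e' => (i, e')) := by
    rw [tgα]
    simp [List.map_reverse]
  have wrevβ : ((tagged β)[i]?.getD []).reverse = (List.range wb.length).map (fun e' => (i, e')) := by
    rw [tgβ]
    simp [List.map_reverse]
  have hxw0 : ((tagged α)[i]?.getD []).reverse[e]? = some (i, e) := by
    rw [wrevα, List.getElem?_map, List.getElem?_range heα]; rfl
  have hxv0 : ((tagged β)[i]?.getD []).reverse[e]? = some (i, e) := by
    rw [wrevβ, List.getElem?_map, List.getElem?_range heβ]; rfl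
  have hew : ∀ e'', ((tagged α)[i]?.getD []).reverse[e'']? = some (i, e) → e'' = e := by
    intro e'' h
    rw [wrevα, List.getElem?_map] at h
    cases hr : (List.range wa.length)[e'']? with
    | none => rw [hr] at h; simp at h
    | some m =>
        rw [hr] at h
        have hm : m = e'' := by
          have hlt := lt_of_g? hr
          rw [List.getElem?_range (by simpa using hlt)] at hr
          exact (Option.some_injective _ hr).symm
        simp only [Option.map_some, Option.some.injEq, Prod.mk.injEq] at h
        omega
  have hev : ∀ e'', ((tagged β)[i]?.getD []).reverse[e'']? = some (i, e) → e'' = e := by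
    intro e'' h
    rw [wrevβ, List.getElem?_map] at h
    cases hr : (List.range wb.length)[e'']? with
    | none => rw [hr] at h; simp at h
    | some m =>
        rw [hr] at h
        have hm : m = e'' := by
          have hlt := lt_of_g? hr
          rw [List.getElem?_range (by simpa using hlt)] at hr
          exact (Option.some_injective _ hr).symm
        simp only [Option.map_some, Option.some.injEq, Prod.mk.injEq] at h
        omega
  have hnw : ∀ n w', (tagged α)[n]? = some w' → (i, e) ∈ w' → n = i := by
    intro n w' hn hm
    have hn2 : n < α.length := by
      have := lt_of_g? hn; simpa [tagged] using this
    rw [tagged_getElem? α n hn2] at hn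
    obtain rfl := Option.some_injective _ hn
    obtain ⟨e₀, -, he₀⟩ := List.mem_map.1 hm
    exact (Prod.mk.injEq _ _ _ _ ▸ he₀).1
  have hnv : ∀ n v', (tagged β)[n]? = some v' → (i, e) ∈ v' → n = i := by
    intro n v' hn hm
    have hn2 : n < β.length := by
      have := lt_of_g? hn; simpa [tagged] using this
    rw [tagged_getElem? β n hn2] at hn
    obtain rfl := Option.some_injective _ hn
    obtain ⟨e₀, -, he₀⟩ := List.mem_map.1 hm
    exact (Prod.mk.injEq _ _ _ _ ▸ he₀).1
  have main := coreF star κ f g (i, e) e i (tagged α) (tagged β) [] [] H1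
    (starry_tagged star hα) (starry_tagged star hβ)
    hnw hnv hew hev hxw0 hxv0 (by simp) (by simp)
  rcases main with ⟨j, k, hkκ, h1, h2⟩ | ⟨h1, h2⟩
  · have hp1 : pageAt κ α j k = some (i, e) := by
      simp only [pageAt, AD]; exact h1
    have hp2 : pageAt κ β j k = some (i, e) := by
      simp only [pageAt, AD]; exact h2
    have hij : i ≤ j := by
      rcases daybound κ (tagged α) [] j k (i, e) h1 with h' | ⟨n, hnj, w', hw', hy⟩
      · simp at h'
      · have := hnw n w' hw' hy
        omega
    have haa : a = a' := by
      have m1 := mapped_page (D := ADaux κ [] (tagged α)) f h1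
      have m2 := mapped_page (D := ADaux κ [] (tagged β)) g h2
      have hfa : f (i, e) = a := by
        have hgdα : α.getD i [] = wa := by rw [List.getD_eq_getElem?_getD, hwa]; rfl
        simp only [hf, fval, hgdα]
        rw [List.getD_eq_getElem?_getD, ha]; rfl
      have hga : g (i, e) = a' := by
        have hgdβ : β.getD i [] = wb := by rw [List.getD_eq_getElem?_getD, hwb]; rfl
        simp only [hg, fval, hgdβ]
        rw [List.getD_eq_getElem?_getD, ha']; rfl
      have e1' : (ADaux κ [] (tagged α)).map (List.map f) = AD κ β := e1.trans hAD
      rw [e1', hfa] at m1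
      rw [e2, hga] at m2
      rw [m2] at m1
      exact (Option.some_injective _ m1).symm
    exact ⟨⟨j, k, hij, hkκ, hp1, hp2⟩, haa⟩
  · obtain ⟨j0, k0, hp⟩ := hreca
    simp only [pageAt] at hp
    exact absurd (page_mem hp) h1
end

section
/- If a letter a in the sentence α = u₁…u_m has tail-sentence with average word length N ≥ 1, and κ ≥ N, then a is recorded in Alice's Diary AD_κ(α). Equivalently (contrapositive): if a is not recorded in AD_κ(α), then the tail-sentence of a has average word length strictly greater than κ. -/
/-- Key lemma: if `x` sits at depth `d` in the stack `s` (already pushed) and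
`d + Σ lengths of remaining words < κ * (number of remaining days including today)`,
then `x` appears in `s.take κ :: ADaux κ (s.drop κ) ws`. -/
lemma ADaux_key {A : Type*} (κ : ℕ) :
    ∀ (ws : List (List A)) (s : List A) (d : ℕ) (x : A),
      s[d]? = some x →
      d + ((ws.map List.length).sum) < κ * (ws.length + 1) →
      ∃ j k : ℕ, (((s.take κ :: ADaux κ (s.drop κ) ws)[j]?).getD [])[k]? = some x := by
  intro ws
  induction ws with
  | nil =>
      intro s d x hs hlt
      refine ⟨0, d, ?_⟩
      simp only [List.getElem?_cons_zero, Option.getD_some]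
      rw [List.getElem?_take, if_pos (by simpa using hlt)]
      exact hs
  | cons w ws ih =>
      intro s d x hs hlt
      by_cases hd : d < κ
      · refine ⟨0, d, ?_⟩
        simp only [List.getElem?_cons_zero, Option.getD_some]
        rw [List.getElem?_take, if_pos hd]
        exact hs
      · push_neg at hd
        have hx : (w.reverse ++ s.drop κ)[w.length + (d - κ)]? = some x := by
          rw [List.getElem?_append_right (by simp)]
          simp only [List.length_reverse, Nat.add_sub_cancel_left]
          rw [List.getElem?_drop]
          rwa [Nat.add_sub_cancel' hd]
        have hlt' : (w.length + (d - κ)) + ((ws.map List.length).sum)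
            < κ * (ws.length + 1) := by
          have h1 : d + ((w :: ws).map List.length).sum = w.length + (d - κ) + (ws.map List.length).sum + κ := by
            simp only [List.map_cons, List.sum_cons]
            omega
          have h2 : κ * ((w :: ws).length + 1) = κ * (ws.length + 1) + κ := by
            simp only [List.length_cons]; ring
          omega
        obtain ⟨j, k, hjk⟩ := ih (w.reverse ++ s.drop κ) (w.length + (d - κ)) x hx hlt'
        refine ⟨j + 1, k, ?_⟩
        simpa [ADaux] using hjk

/-- Splitting a run of the diary at a prefix of the input sentence. -/
lemma ADaux_append {A : Type*} (κ : ℕ) :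
    ∀ (ws1 : List (List A)) (s : List A) (ws2 : List (List A)),
      ∃ s', ADaux κ s (ws1 ++ ws2) = ADaux κ s ws1 ++ ADaux κ s' ws2 := by
  intro ws1
  induction ws1 with
  | nil => intro s ws2; exact ⟨s, by simp [ADaux]⟩
  | cons w ws ih =>
      intro s ws2
      obtain ⟨s', h⟩ := ih ((w.reverse ++ s).drop κ) ws2
      exact ⟨s', by simp [ADaux, h]⟩

lemma tagged_map_length {A : Type*} (α : List (List A)) :
    (tagged α).map List.length = α.map List.length := by
  apply List.ext_getElem?
  intro n
  simp only [tagged, List.getElem?_map, List.getElem?_mapIdx, Option.map_map]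
  cases α[n]? <;> simp [Function.comp]

/-- if the tail-sentence of a letter (day i, distance e+1 from the end of its
word) in α = u₁…u_m has average word length N with 1 ≤ N ≤ κ, then that letter is recorded
in AD_κ(α).  (The tail-sentence has e + 1 + Σ_{l>i} length(u_l) letters and m − i words.) -/
theorem stmt_11 {A : Type*} [DecidableEq A] (κ : ℕ) (α : List (List A))
    (i e : ℕ) (w : List A) (hw : α[i]? = some w) (he : e < w.length)
    (N : ℝ) (hN1 : 1 ≤ N)
    (hAWL : ((e + 1 + (((α.drop (i + 1)).map List.length).sum) : ℕ) : ℝ)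
        = N * ((α.length - i : ℕ) : ℝ))
    (hκ : N ≤ (κ : ℝ)) :
    recorded κ α i e := by
  have hi : i < α.length := by
    rcases List.getElem?_eq_some_iff.mp hw with ⟨h, _⟩; exact h
  set T := tagged α with hT
  have hTlen : T.length = α.length := by
    have := congrArg List.length (tagged_map_length α); simpa using this
  -- The tagged word on day i
  have hTi : T[i]? = some ((List.range w.length).reverse.map (fun e => (i, e))) := by
    simp [hT, tagged, List.getElem?_mapIdx, hw]
  -- split T at day i
  have hsplit : T = T.take i ++ (((List.range w.length).reverse.map (fun e => (i, e))) :: T.drop (i + 1)) := by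
    conv_lhs => rw [← List.take_append_drop i T]
    congr 1
    rw [List.drop_eq_getElem_cons (by omega : i < T.length)]
    congr 1
    have := hTi
    rw [List.getElem?_eq_getElem (by omega : i < T.length)] at this
    exact (Option.some_injective _ this)
  -- sums of lengths of the tail of T
  have hsum : ((T.drop (i+1)).map List.length).sum = ((α.drop (i + 1)).map List.length).sum := by
    rw [List.map_drop, tagged_map_length, ← List.map_drop]
  have htlen : (T.drop (i+1)).length = α.length - (i+1) := by
    simp [hTlen]
  -- numeric inequality
  have hkey : e + ((T.drop (i+1)).map List.length).sum < κ * ((T.drop (i+1)).length + 1) := by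
    rw [hsum, htlen]
    have hmi : α.length - (i+1) + 1 = α.length - i := by omega
    rw [hmi]
    have h1 : ((e + 1 + (((α.drop (i + 1)).map List.length).sum) : ℕ) : ℝ)
        ≤ ((κ * (α.length - i) : ℕ) : ℝ) := by
      rw [hAWL]
      push_cast
      exact mul_le_mul_of_nonneg_right hκ (by positivity)
    have h2 : e + 1 + ((α.drop (i + 1)).map List.length).sum ≤ κ * (α.length - i) :=
      Nat.cast_le.mp h1
    omega
  -- the letter sits at depth e of the pushed stack on day i
  obtain ⟨s', hrun⟩ := ADaux_append κ (T.take i) ([] : List (ℕ × ℕ)) (((List.range w.length).reverse.map (fun e => (i, e))) :: T.drop (i + 1))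
  have hstack : ((((List.range w.length).reverse.map (fun e => (i, e))).reverse ++ s'))[e]? = some (i, e) := by
    rw [List.getElem?_append_left (by simpa using he)]
    rw [← List.map_reverse, List.reverse_reverse, List.getElem?_map, List.getElem?_range he]
    rfl
  obtain ⟨j, k, hjk⟩ := ADaux_key κ (T.drop (i+1)) _ e (i, e) hstack hkey
  rw [← hsplit] at hrun
  refine ⟨(ADaux κ [] (T.take i)).length + j, k, ?_⟩
  unfold pageAt AD
  rw [← hT, hrun]
  rw [List.getElem?_append_right (by omega), Nat.add_sub_cancel_left]
  show ((ADaux κ s' (_ :: T.drop (i+1)))[j]?.getD [])[k]? = _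
  rw [ADaux]
  exact hjk
end

section
/- Quantitative non-recording bound for Alice's Diary: If a letter a in word u_i of the sentence α = u₁…u_m is not recorded in AD_κ(α), then every page of chapters v_i, v_{i+1}, …, v_m records a letter occurring strictly after a, all those chapters have exactly κ pages, and hence the tail-sentence of a contains at least κ(m − i + 1) + 1 letters. -/
namespace Stmt12

/-- the stack after processing the words `ws` starting from stack `s`. -/
def stackAfter {A : Type*} (κ : ℕ) (s : List A) (ws : List (List A)) : List A :=
  ws.foldl (fun st w => ((w.reverse ++ st).drop κ)) s

lemma ADaux_append {A : Type*} (κ : ℕ) :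
    ∀ (l₁ l₂ : List (List A)) (s : List A),
    ADaux κ s (l₁ ++ l₂) = ADaux κ s l₁ ++ ADaux κ (stackAfter κ s l₁) l₂
  | [], l₂, s => by simp [ADaux, stackAfter]
  | w :: l₁, l₂, s => by
      show _ :: ADaux κ _ (l₁ ++ l₂) = _
      rw [ADaux_append κ l₁ l₂]
      rfl

lemma length_ADaux {A : Type*} (κ : ℕ) :
    ∀ (ws : List (List A)) (s : List A), (ADaux κ s ws).length = ws.length
  | [], s => rfl
  | w :: ws, s => by simp [ADaux, length_ADaux κ ws]

lemma stackAfter_sublist {A : Type*} (κ : ℕ) :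
    ∀ (ws : List (List A)) (s : List A),
    (stackAfter κ s ws).Sublist ((ws.map List.reverse).reverse.flatten ++ s)
  | [], s => by simp [stackAfter]
  | w :: ws, s => by
      have h1 := stackAfter_sublist κ ws ((w.reverse ++ s).drop κ)
      have h2 : ((ws.map List.reverse).reverse.flatten ++ (w.reverse ++ s).drop κ).Sublist
          ((ws.map List.reverse).reverse.flatten ++ (w.reverse ++ s)) :=
        (List.drop_sublist κ _).append_left _
      have h3 := h1.trans h2
      simpa [stackAfter, List.flatten_append, List.append_assoc] using h3

/-- `Later y x` : y occurs strictly after x in the sentence. -/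
def Later (y x : ℕ × ℕ) : Prop := x.1 < y.1 ∨ (y.1 = x.1 ∧ y.2 < x.2)

def tagFrom {A : Type*} (n : ℕ) : List (List A) → List (List (ℕ × ℕ))
  | [] => []
  | w :: ws => ((List.range w.length).reverse.map (fun e => (n, e))) :: tagFrom (n + 1) ws

lemma tagFrom_eq_mapIdx {A : Type*} :
    ∀ (α : List (List A)) (n : ℕ),
    tagFrom n α = α.mapIdx (fun i w => (List.range w.length).reverse.map (fun e => (n + i, e)))
  | [], n => rfl
  | w :: ws, n => by
      simp only [tagFrom, List.mapIdx_cons, Nat.add_zero, tagFrom_eq_mapIdx ws (n + 1)]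
      have : (fun (i : ℕ) (w : List A) => List.map (fun e => (n + 1 + i, e)) (List.range w.length).reverse)
           = (fun (i : ℕ) (w : List A) => List.map (fun e => (n + (i + 1), e)) (List.range w.length).reverse) := by
        funext i a
        have : n + 1 + i = n + (i + 1) := by omega
        rw [this]
      rw [this]

lemma tagged_eq {A : Type*} (α : List (List A)) : tagged α = tagFrom 0 α := by
  rw [tagFrom_eq_mapIdx, tagged]
  simp

lemma length_tagFrom {A : Type*} :
    ∀ (ws : List (List A)) (n : ℕ), (tagFrom n ws).length = ws.length
  | [], n => rfl
  | w :: ws, n => by simp [tagFrom, length_tagFrom ws]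

lemma tagFrom_map_length {A : Type*} :
    ∀ (ws : List (List A)) (n : ℕ), (tagFrom n ws).map List.length = ws.map List.length
  | [], n => rfl
  | w :: ws, n => by simp [tagFrom, tagFrom_map_length ws]

lemma tagFrom_getElem? {A : Type*} (α : List (List A)) (n i : ℕ) :
    (tagFrom n α)[i]? = α[i]?.map
      (fun w => (List.range w.length).reverse.map (fun e => (n + i, e))) := by
  rw [tagFrom_eq_mapIdx, List.getElem?_mapIdx]

lemma tagFrom_append {A : Type*} :
    ∀ (a b : List (List A)) (n : ℕ),
      tagFrom n (a ++ b) = tagFrom n a ++ tagFrom (n + a.length) b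
  | [], b, n => by simp [tagFrom]
  | w :: a, b, n => by
      show _ :: tagFrom (n + 1) (a ++ b) = _
      rw [tagFrom_append a b (n + 1)]
      simp only [tagFrom, List.cons_append, List.length_cons]
      congr 3
      omega

lemma mem_tagFrom_flatten {A : Type*} :
    ∀ (ws : List (List A)) (n : ℕ) (y : ℕ × ℕ), y ∈ (tagFrom n ws).flatten →
      n ≤ y.1 ∧ y.1 - n < ws.length ∧ ∃ w, ws[y.1 - n]? = some w ∧ y.2 < w.length
  | [], n, y => by simp [tagFrom]
  | w :: ws, n, y => by
      intro hy
      simp only [tagFrom, List.flatten_cons, List.mem_append] at hy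
      rcases hy with hy | hy
      · simp only [List.mem_map, List.mem_reverse, List.mem_range] at hy
        obtain ⟨ee, hee, rfl⟩ := hy
        refine ⟨le_refl n, by simpa using Nat.zero_lt_succ _, w, ?_, hee⟩
        simp
      · obtain ⟨h1, h2, w', hw', hlt⟩ := mem_tagFrom_flatten ws (n + 1) y hy
        have hd : y.1 - n = (y.1 - (n + 1)) + 1 := by omega
        refine ⟨by omega, by simp only [List.length_cons]; omega, w', ?_, hlt⟩
        rw [hd]
        simpa using hw'

lemma pairwise_tagFrom {A : Type*} :
    ∀ (ws : List (List A)) (n : ℕ),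
      List.Pairwise Later ((tagFrom n ws).map List.reverse).reverse.flatten
  | [], n => by simp [tagFrom]
  | w :: ws, n => by
      have IH := pairwise_tagFrom ws (n + 1)
      simp only [tagFrom, List.map_cons, List.reverse_cons, List.flatten_append,
        List.flatten_cons, List.flatten_nil, List.append_nil, ← List.map_reverse,
        List.reverse_reverse] at *
      rw [List.pairwise_append]
      refine ⟨IH, ?_, ?_⟩
      · rw [List.pairwise_map]
        exact (List.pairwise_lt_range (n := w.length)).imp (fun h => Or.inr ⟨rfl, h⟩)
      · intro a ha b hb
        have ha' : a ∈ (tagFrom (n + 1) ws).flatten := by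
          rw [List.mem_flatten] at ha ⊢
          obtain ⟨l, hl, hal⟩ := ha
          simp only [List.mem_reverse, List.mem_map] at hl
          obtain ⟨l', hl', rfl⟩ := hl
          exact ⟨l', hl', by simpa using hal⟩
        have h1 := (mem_tagFrom_flatten ws (n + 1) a ha').1
        simp only [List.mem_map, List.mem_range] at hb
        obtain ⟨ee, _, rfl⟩ := hb
        exact Or.inl (by simpa using by omega : (n, ee).1 < a.1)

lemma main_lemma (κ : ℕ) :
    ∀ (ws : List (List (ℕ × ℕ))) (s : List (ℕ × ℕ)) (x : ℕ × ℕ),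
    x ∈ s →
    List.Pairwise Later ((ws.map List.reverse).reverse.flatten ++ s) →
    (∀ j k : ℕ, (((ADaux κ s ws)[j]?).getD [])[k]? ≠ some x) →
    ∀ j, j < ws.length → (((ADaux κ s ws)[j]?).getD []).length = κ ∧
      ∀ y ∈ ((ADaux κ s ws)[j]?).getD [], Later y x
  | [], s, x => by intro _ _ _ j hj; simp at hj
  | w :: ws, s, x => by
      intro hxs hpw hrec j hj
      set c := w.reverse ++ s with hc
      have hxc : x ∈ c := by simp [hc, hxs]
      -- c is pairwise Later
      have hGc : List.Pairwise Later ((ws.map List.reverse).reverse.flatten ++ c) := by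
        have : ((w :: ws).map List.reverse).reverse.flatten ++ s
            = (ws.map List.reverse).reverse.flatten ++ c := by
          simp [hc, List.flatten_append, List.append_assoc]
        rwa [this] at hpw
      have hpc : List.Pairwise Later c :=
        hGc.sublist (List.sublist_append_right _ _)
      -- x is not on page 0
      have hx_take : x ∉ c.take κ := by
        intro hmem
        obtain ⟨k, hk, hkx⟩ := List.mem_iff_getElem.mp hmem
        exact hrec 0 k (by simp [ADaux, ← hc, List.getElem?_eq_getElem hk, hkx])
      have hx_drop : x ∈ c.drop κ := by
        have := List.take_append_drop κ c
        rcases List.mem_append.mp (by rw [this]; exact hxc) with h | h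
        · exact absurd h hx_take
        · exact h
      -- pairwise across the split
      have hcross : ∀ y ∈ c.take κ, ∀ b ∈ c.drop κ, Later y b := by
        have := hpc
        rw [← List.take_append_drop κ c, List.pairwise_append] at this
        exact this.2.2
      rcases j with _ | j
      · constructor
        · have hne : c.drop κ ≠ [] := List.ne_nil_of_mem hx_drop
          have : κ < c.length := by
            have := (List.length_drop : (c.drop κ).length = c.length - κ)  -- (c.drop κ).length = c.length - κ
            have hpos : 0 < (c.drop κ).length := List.length_pos_iff.mpr hne
            omega
          simp [ADaux, ← hc, List.length_take]
          omega
        · intro y hy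
          simp only [ADaux, ← hc, List.getElem?_cons_zero, Option.getD_some] at hy
          exact hcross y hy x hx_drop
      · have hrec' : ∀ j k : ℕ, (((ADaux κ (c.drop κ) ws)[j]?).getD [])[k]? ≠ some x := by
          intro j' k
          have := hrec (j' + 1) k
          simpa [ADaux, ← hc] using this
        have hpw' : List.Pairwise Later ((ws.map List.reverse).reverse.flatten ++ c.drop κ) :=
          hGc.sublist ((List.drop_sublist κ c).append_left _)
        have := main_lemma κ ws (c.drop κ) x hx_drop hpw' hrec' j (by simpa using hj)
        simpa [ADaux, ← hc] using this

lemma ADaux_map_length {A B : Type*} (κ : ℕ) :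
    ∀ (ws₁ : List (List A)) (ws₂ : List (List B)) (s₁ : List A) (s₂ : List B),
    ws₁.map List.length = ws₂.map List.length → s₁.length = s₂.length →
    (ADaux κ s₁ ws₁).map List.length = (ADaux κ s₂ ws₂).map List.length
  | [], [], _, _ => by intros; rfl
  | [], w :: ws, _, _ => by intro h _; simp at h
  | w :: ws, [], _, _ => by intro h _; simp at h
  | w₁ :: ws₁, w₂ :: ws₂, s₁, s₂ => by
      intro hw hs
      simp only [List.map_cons, List.cons.injEq] at hw
      have hlen : (w₁.reverse ++ s₁).length = (w₂.reverse ++ s₂).length := by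
        simp [hw.1, hs]
      have IH := ADaux_map_length κ ws₁ ws₂ ((w₁.reverse ++ s₁).drop κ)
        ((w₂.reverse ++ s₂).drop κ) hw.2 (by simp [hlen])
      simp only [ADaux, List.map_cons, IH, List.length_take, hlen]

open List in
lemma ADaux_perm {A : Type*} (κ : ℕ) :
    ∀ (ws : List (List A)) (s : List A),
    ((ADaux κ s ws).flatten ++ stackAfter κ s ws).Perm ((ws.map List.reverse).flatten ++ s)
  | [], s => by simp [ADaux, stackAfter]
  | w :: ws, s => by
      set c := w.reverse ++ s with hc
      have IH := ADaux_perm κ ws (c.drop κ)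
      calc (ADaux κ s (w :: ws)).flatten ++ stackAfter κ s (w :: ws)
          = c.take κ ++ ((ADaux κ (c.drop κ) ws).flatten ++ stackAfter κ (c.drop κ) ws) := by
            simp [ADaux, stackAfter, ← hc, List.append_assoc]
        _ ~ c.take κ ++ ((ws.map List.reverse).flatten ++ c.drop κ) := IH.append_left _
        _ ~ c.take κ ++ (c.drop κ ++ (ws.map List.reverse).flatten) :=
            (List.perm_append_comm).append_left _
        _ = c ++ (ws.map List.reverse).flatten := by
            rw [← List.append_assoc, List.take_append_drop]
        _ = w.reverse ++ (s ++ (ws.map List.reverse).flatten) := by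
            simp [hc, List.append_assoc]
        _ ~ w.reverse ++ ((ws.map List.reverse).flatten ++ s) :=
            (List.perm_append_comm).append_left _
        _ = ((w :: ws).map List.reverse).flatten ++ s := by
            simp [List.append_assoc]

lemma Later.ne {y x : ℕ × ℕ} (h : Later y x) : y ≠ x := by
  rintro rfl
  rcases h with h | ⟨_, h⟩ <;> omega

end Stmt12

open Stmt12

/-- quantitative non-recording bound: if the letter of day i at distance e+1
from the end of its word is not recorded in AD_κ(α), then every chapter v_i,…,v_m has
exactly κ pages, every page of those chapters records a letter occurring strictly after the
given letter, and hence the tail-sentence of the letter has at least κ(m − i + 1) + 1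
letters (m − i + 1 being the number of its words, 0-based: α.length − i). -/
theorem stmt_12 {A : Type*} [DecidableEq A] (κ : ℕ) (α : List (List A))
    (i e : ℕ) (w : List A) (hw : α[i]? = some w) (he : e < w.length)
    (hnrec : ¬ recorded κ α i e) :
    (∀ j : ℕ, i ≤ j → j < α.length → (((AD κ α)[j]?).getD []).length = κ) ∧
    (∀ j k : ℕ, i ≤ j → j < α.length → k < κ →
      ∃ i' e' : ℕ, pageAt κ α j k = some (i', e') ∧
        (i < i' ∨ (i' = i ∧ e' < e))) ∧
    κ * (α.length - i) + 1 ≤ e + 1 + ((α.drop (i + 1)).map List.length).sum := by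
  obtain ⟨him, hwi⟩ := List.getElem?_eq_some_iff.mp hw
  set B := tagged α with hB
  have hB' : B = tagFrom 0 α := by rw [hB, tagged_eq]
  have hpage : ∀ j k : ℕ, pageAt κ α j k = (((AD κ B)[j]?).getD [])[k]? := fun _ _ => rfl
  have hBlen : B.length = α.length := by rw [hB', length_tagFrom]
  set βw : List (ℕ × ℕ) := (List.range w.length).reverse.map (fun e' => (i, e')) with hβw
  set si : List (ℕ × ℕ) := stackAfter κ [] (B.take i) with hsi
  have hBi : B[i]? = some βw := by
    rw [hB', tagFrom_getElem?, hw]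
    simp [hβw]
  have hiB : i < B.length := by omega
  have hBig : B[i] = βw := by
    have := List.getElem?_eq_getElem hiB
    rw [hBi] at this
    exact (Option.some_inj.mp this).symm
  have hdropB : B.drop i = βw :: B.drop (i + 1) := by
    rw [List.drop_eq_getElem_cons hiB, hBig]
  have hsplitAD : AD κ B = ADaux κ [] (B.take i) ++ ADaux κ si (B.drop i) := by
    calc AD κ B = ADaux κ [] (B.take i ++ B.drop i) := by rw [List.take_append_drop]; rfl
      _ = _ := ADaux_append κ _ _ _
  have hlen1 : (ADaux κ ([] : List (ℕ × ℕ)) (B.take i)).length = i := by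
    rw [length_ADaux, List.length_take]
    omega
  have htrick : ADaux κ si (βw :: B.drop (i + 1))
      = ADaux κ (βw.reverse ++ si) ([] :: B.drop (i + 1)) := by
    simp [ADaux]
  have hch : ∀ j, i ≤ j →
      (AD κ B)[j]? = (ADaux κ (βw.reverse ++ si) ([] :: B.drop (i + 1)))[j - i]? := by
    intro j hij
    rw [hsplitAD, List.getElem?_append_right (by rw [hlen1]; exact hij), hlen1,
      hdropB, htrick]
  -- hypotheses of the main lemma
  have hx : (i, e) ∈ βw.reverse ++ si := by
    rw [List.mem_append]
    left
    rw [hβw, List.mem_reverse, List.mem_map]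
    exact ⟨e, by simpa using he, rfl⟩
  have hfull : List.Pairwise Later ((B.map List.reverse).reverse.flatten) := by
    rw [hB']; exact pairwise_tagFrom α 0
  have hTi : si.Sublist (((B.take i).map List.reverse).reverse.flatten) := by
    have := stackAfter_sublist κ (B.take i) []
    simpa using this
  have hBsplit : B = (B.take i ++ [βw]) ++ B.drop (i + 1) := by
    rw [List.append_assoc, List.singleton_append, ← hdropB, List.take_append_drop]
  have hXeq : (B.map List.reverse).reverse.flatten
      = ((B.drop (i + 1)).map List.reverse).reverse.flatten
        ++ (βw.reverse ++ ((B.take i).map List.reverse).reverse.flatten) := by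
    conv_lhs => rw [hBsplit]
    simp [List.flatten_append, List.append_assoc]
  have hpwG : List.Pairwise Later
      ((([] :: B.drop (i + 1)).map List.reverse).reverse.flatten ++ (βw.reverse ++ si)) := by
    have hGeq : (([] :: B.drop (i + 1)).map List.reverse).reverse.flatten ++ (βw.reverse ++ si)
        = ((B.drop (i + 1)).map List.reverse).reverse.flatten ++ (βw.reverse ++ si) := by
      simp [List.flatten_append]
    rw [hGeq]
    refine List.Pairwise.sublist ?_ hfull
    rw [hXeq]
    exact ((hTi.append_left βw.reverse).append_left _)
  have hrec' : ∀ j k : ℕ,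
      (((ADaux κ (βw.reverse ++ si) ([] :: B.drop (i + 1)))[j]?).getD [])[k]? ≠ some (i, e) := by
    intro j k h
    refine hnrec ⟨i + j, k, ?_⟩
    rw [hpage, hch (i + j) (by omega)]
    have : i + j - i = j := by omega
    rw [this]
    exact h
  have hmain := main_lemma κ ([] :: B.drop (i + 1)) (βw.reverse ++ si) (i, e) hx hpwG hrec'
  have key : ∀ j, i ≤ j → j < α.length →
      (((AD κ B)[j]?).getD []).length = κ ∧
      ∀ y ∈ ((AD κ B)[j]?).getD [], Later y (i, e) := by
    intro j hij hjm
    have hjlt : j - i < ([] :: B.drop (i + 1)).length := by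
      simp only [List.length_cons, List.length_drop, hBlen]
      omega
    have := hmain (j - i) hjlt
    rwa [← hch j hij] at this
  -- transfer of chapter lengths to AD κ α
  have hml : (AD κ α).map List.length = (AD κ B).map List.length := by
    rw [AD, AD]
    exact ADaux_map_length κ α B [] []
      (by rw [hB', tagFrom_map_length]) rfl
  have part1 : ∀ j : ℕ, i ≤ j → j < α.length → (((AD κ α)[j]?).getD []).length = κ := by
    intro j hij hjm
    have hj1 : j < (AD κ α).length := by rw [AD, length_ADaux]; exact hjm
    have hj2 : j < (AD κ B).length := by rw [AD, length_ADaux]; omega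
    have h1 : ((AD κ α).map List.length)[j]? = ((AD κ B).map List.length)[j]? := by rw [hml]
    rw [List.getElem?_map, List.getElem?_map, List.getElem?_eq_getElem hj1,
      List.getElem?_eq_getElem hj2] at h1
    simp only [Option.map_some] at h1
    have h2 := (key j hij hjm).1
    rw [List.getElem?_eq_getElem hj2] at h2
    simp only [Option.getD_some] at h2
    rw [List.getElem?_eq_getElem hj1]
    simp only [Option.getD_some, Option.some_inj] at h1 ⊢
    rw [h1]
    exact h2
  refine ⟨part1, ?_, ?_⟩
  · -- part 2
    intro j k hij hjm hk
    have hkey := key j hij hjm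
    have hklen : k < (((AD κ B)[j]?).getD []).length := by rw [hkey.1]; exact hk
    refine ⟨(((AD κ B)[j]?).getD [])[k].1, (((AD κ B)[j]?).getD [])[k].2, ?_, ?_⟩
    · rw [hpage, List.getElem?_eq_getElem hklen]
    · have hy := hkey.2 _ (List.getElem_mem hklen)
      rcases hy with h | ⟨h1, h2⟩
      · exact Or.inl h
      · exact Or.inr ⟨h1, h2⟩
  · -- part 3
    have hADB_len : (AD κ B).length = α.length := by rw [AD, length_ADaux]; omega
    set L := ((AD κ B).drop i).flatten with hL
    have hrep : ((AD κ B).drop i).map List.length = List.replicate (α.length - i) κ := by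
      rw [List.eq_replicate_iff]
      constructor
      · simp [hADB_len]
      · intro b hb
        rw [List.mem_map] at hb
        obtain ⟨c, hc, rfl⟩ := hb
        rw [List.mem_iff_getElem] at hc
        obtain ⟨t, ht, rfl⟩ := hc
        have ht2 : t < α.length - i := by
          simpa [hADB_len] using ht
        have hmm : i + t < (AD κ B).length := by omega
        have hgd := (key (i + t) (by omega) (by omega)).1
        rw [List.getElem?_eq_getElem hmm] at hgd
        simp only [Option.getD_some] at hgd
        rw [List.getElem_drop]
        exact hgd
    have hLlen : L.length = (α.length - i) * κ := by
      rw [hL, List.length_flatten, hrep, List.sum_replicate, smul_eq_mul]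
    have hflat_nodup : (AD κ B).flatten.Nodup := by
      have hnodX : ((B.map List.reverse).reverse.flatten).Nodup :=
        hfull.imp (fun h => Later.ne h)
      have hperm1 : ((B.map List.reverse).reverse.flatten).Perm
          ((B.map List.reverse).flatten) := (List.reverse_perm _).flatten
      have hnod2 : ((B.map List.reverse).flatten).Nodup := hperm1.nodup_iff.mp hnodX
      have hperm2 := ADaux_perm κ B []
      have hnod3 : ((AD κ B).flatten ++ stackAfter κ [] B).Nodup := by
        rw [AD]
        exact hperm2.nodup_iff.mpr (by simpa using hnod2)
      exact List.Nodup.sublist (List.sublist_append_left _ _) hnod3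
    have hLnodup : L.Nodup := by
      have hsfx : (AD κ B).flatten = ((AD κ B).take i).flatten ++ L := by
        rw [hL, ← List.flatten_append, List.take_append_drop]
      have hsl : L.Sublist ((AD κ B).flatten) := by
        rw [hsfx]; exact List.sublist_append_right _ _
      exact List.Nodup.sublist hsl hflat_nodup
    set tl := (List.range e).map (fun e' => (i, e'))
      ++ (tagFrom (i + 1) (α.drop (i + 1))).flatten with htl
    have hsubset : L ⊆ tl := by
      intro y hyL
      rw [hL, List.mem_flatten] at hyL
      obtain ⟨c, hc, hyc⟩ := hyL
      obtain ⟨t, ht, rfl⟩ := List.mem_iff_getElem.mp hc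
      have ht2 : t < α.length - i := by simpa [hADB_len] using ht
      have hmm : i + t < (AD κ B).length := by omega
      rw [List.getElem_drop] at hyc
      have hlater : Later y (i, e) := by
        apply (key (i + t) (by omega) (by omega)).2
        rw [List.getElem?_eq_getElem hmm]
        simpa using hyc
      have hyAD : y ∈ (AD κ B).flatten :=
        List.mem_flatten.mpr ⟨_, List.getElem_mem hmm, hyc⟩
      have hyB : y ∈ B.flatten := by
        have h1 : y ∈ (AD κ B).flatten ++ stackAfter κ [] B :=
          List.mem_append.mpr (Or.inl hyAD)
        have h2 := (ADaux_perm κ B []).mem_iff.mp (by rw [AD] at h1; exact h1)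
        simp only [List.append_nil, List.mem_append, List.mem_flatten, List.mem_map] at h2
        rw [List.mem_flatten]
        obtain ⟨l, ⟨l', hl', rfl⟩, hyl⟩ := h2
        exact ⟨l', hl', by simpa using hyl⟩
      rw [hB'] at hyB
      have hbounds := mem_tagFrom_flatten α 0 y hyB
      simp only [Nat.sub_zero, Nat.zero_add] at hbounds
      rw [htl, List.mem_append]
      rcases hlater with hlt | ⟨heq, hlt2⟩
      · right
        have hilt : i < y.1 := hlt
        have hsplit2 : tagFrom 0 α
            = tagFrom 0 (α.take (i + 1)) ++ tagFrom (i + 1) (α.drop (i + 1)) := by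
          have h3 := tagFrom_append (α.take (i + 1)) (α.drop (i + 1)) 0
          rw [List.take_append_drop] at h3
          have h4 : (α.take (i + 1)).length = i + 1 := by
            rw [List.length_take]; omega
          rw [h4, Nat.zero_add] at h3
          exact h3
        rw [hsplit2, List.flatten_append, List.mem_append] at hyB
        rcases hyB with h | h
        · exfalso
          have h5 := (mem_tagFrom_flatten _ 0 y h).2.1
          rw [List.length_take] at h5
          omega
        · exact h
      · left
        rw [List.mem_map]
        refine ⟨y.2, List.mem_range.mpr hlt2, ?_⟩
        have : y.1 = i := heq
        rw [← this]
    have hle := (List.subperm_of_subset hLnodup hsubset).length_le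
    rw [hLlen] at hle
    have htlen : tl.length = e + ((α.drop (i + 1)).map List.length).sum := by
      rw [htl]
      simp [List.length_flatten, tagFrom_map_length]
    rw [htlen] at hle
    calc κ * (α.length - i) + 1 = (α.length - i) * κ + 1 := by rw [mul_comm]
      _ ≤ (e + ((α.drop (i + 1)).map List.length).sum) + 1 := Nat.add_le_add_right hle 1
      _ = e + 1 + ((α.drop (i + 1)).map List.length).sum := by omega
end

section
/- Corollary on distinguishing sentences via Alice's Diary: Let α = u₁…u_p u_{p+1}…u_{p+m} and β = u₁…u_p u'_{p+1}…u'_{p+n} be starred sentences with u_{p+1} ≠ u'_{p+1}. Suppose there are letters a ∈ u_{p+j} and a' ∈ u'_{p+j} which are distinct, at equal distance from the ends of their words, with tail-sentences of average word length N and N' respectively. Let i ∈ ℕ₀ with p+j+i ≤ p+min(m,n). If κ ≥ N·(m−j+1)/(i+1) and κ ≥ N'·(n−j+1)/(i+1), then d(AD_κ(α), AD_κ(β)) ≥ d(α,β) − 2j − 2i, where d denotes the sentence-tree metric. -/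
namespace Stmt13Aux

variable {A : Type*}

def stepStack (κ : ℕ) (s w : List A) : List A := (w.reverse ++ s).drop κ

def stackFold (κ : ℕ) (s : List A) (ws : List (List A)) : List A :=
  ws.foldl (stepStack κ) s

def IsBlock (star : A) (B : List A) : Prop := ∃ C, B = C ++ [star] ∧ star ∉ C

def TS (star la lb : A) (Gα Gβ sα sβ : List A) : Prop :=
  ∃ (Bα Bβ : List (List A)) (Eα Eβ : List A),
    sα = Bα.flatten ++ (Eα ++ la :: Gα) ∧
    sβ = Bβ.flatten ++ (Eβ ++ lb :: Gβ) ∧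
    Bα.length = Bβ.length ∧
    (∀ b ∈ Bα, IsBlock star b) ∧ (∀ b ∈ Bβ, IsBlock star b) ∧
    star ∉ Eα ∧ star ∉ Eβ ∧ Eα.length = Eβ.length

lemma take_eq_getElem? {l1 l2 : List A} {κ x : ℕ} (h : l1.take κ = l2.take κ)
    (hx : x < κ) : l1[x]? = l2[x]? := by
  have h1 : (l1.take κ)[x]? = (l2.take κ)[x]? := by rw [h]
  rwa [List.getElem?_take, List.getElem?_take, if_pos hx, if_pos hx] at h1

lemma getElem?_mid (C : List A) (a : A) (rest : List A) :
    (C ++ a :: rest)[C.length]? = some a := by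
  rw [List.getElem?_append_right le_rfl]
  simp

lemma getElem?_pre (C : List A) (a : A) (rest : List A) {x : ℕ} (hx : x < C.length) :
    (C ++ a :: rest)[x]? = some C[x] := by
  rw [List.getElem?_append_left hx, List.getElem?_eq_getElem hx]

lemma core (star la lb : A) (hne : la ≠ lb) (Gα Gβ : List A) :
    ∀ (Bα Bβ : List (List A)) (Eα Eβ : List A) (κ : ℕ),
    Bα.length = Bβ.length → (∀ b ∈ Bα, IsBlock star b) → (∀ b ∈ Bβ, IsBlock star b) →
    star ∉ Eα → star ∉ Eβ → Eα.length = Eβ.length →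
    (Bα.flatten ++ (Eα ++ la :: Gα)).take κ = (Bβ.flatten ++ (Eβ ++ lb :: Gβ)).take κ →
    TS star la lb Gα Gβ ((Bα.flatten ++ (Eα ++ la :: Gα)).drop κ)
      ((Bβ.flatten ++ (Eβ ++ lb :: Gβ)).drop κ) := by
  intro Bα
  induction Bα with
  | nil =>
    intro Bβ Eα Eβ κ hlen _ _ hEα hEβ hE heq
    have hBβ : Bβ = [] := List.length_eq_zero_iff.mp (by simpa using hlen.symm)
    subst hBβ
    simp only [List.flatten_nil, List.nil_append] at heq ⊢
    by_cases hκ : κ ≤ Eα.length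
    · rw [List.drop_append_of_le_length hκ, List.drop_append_of_le_length (by omega)]
      refine ⟨[], [], Eα.drop κ, Eβ.drop κ, by simp, by simp, rfl, by simp, by simp,
        fun h => hEα (List.drop_subset κ Eα h), fun h => hEβ (List.drop_subset κ Eβ h), by
          simp [hE]⟩
    · exfalso
      have h1 : (Eα ++ la :: Gα)[Eα.length]? = some la := getElem?_mid _ _ _
      have h2 : (Eβ ++ lb :: Gβ)[Eβ.length]? = some lb := getElem?_mid _ _ _
      have h3 := take_eq_getElem? heq (x := Eα.length) (by omega)
      rw [h1, hE, h2] at h3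
      exact hne (Option.some_injective _ h3)
  | cons B0 Bα' IH =>
    intro Bβ Eα Eβ κ hlen hBα hBβ hEα hEβ hE heq
    obtain ⟨B0', Bβ', rfl⟩ : ∃ b bs, Bβ = b :: bs := by
      cases Bβ with
      | nil => simp at hlen
      | cons b bs => exact ⟨b, bs, rfl⟩
    obtain ⟨Cα, rfl, hCα⟩ := hBα B0 List.mem_cons_self
    obtain ⟨Cβ, rfl, hCβ⟩ := hBβ B0' List.mem_cons_self
    set restα := Bα'.flatten ++ (Eα ++ la :: Gα) with hrα
    set restβ := Bβ'.flatten ++ (Eβ ++ lb :: Gβ) with hrβ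
    have hLα : ((Cα ++ [star]) :: Bα').flatten ++ (Eα ++ la :: Gα)
        = Cα ++ star :: restα := by simp [hrα]
    have hLβ : ((Cβ ++ [star]) :: Bβ').flatten ++ (Eβ ++ lb :: Gβ)
        = Cβ ++ star :: restβ := by simp [hrβ]
    rw [hLα, hLβ] at heq ⊢
    have hBα' : ∀ b ∈ Bα', IsBlock star b := fun b hb => hBα b (List.mem_cons_of_mem _ hb)
    have hBβ' : ∀ b ∈ Bβ', IsBlock star b := fun b hb => hBβ b (List.mem_cons_of_mem _ hb)
    have hlen' : Bα'.length = Bβ'.length := by simpa using hlen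
    by_cases hbα : Cα.length + 1 ≤ κ
    · by_cases hbβ : Cβ.length + 1 ≤ κ
      · have hbb : Cα.length = Cβ.length := by
          rcases lt_trichotomy Cα.length Cβ.length with h | h | h
          · exfalso
            have h1 : (Cα ++ star :: restα)[Cα.length]? = some star := getElem?_mid _ _ _
            have h2 : (Cβ ++ star :: restβ)[Cα.length]? = some Cβ[Cα.length] :=
              getElem?_pre _ _ _ h
            have h3 := take_eq_getElem? heq (x := Cα.length) (by omega)
            rw [h1, h2] at h3
            exact hCβ ((Option.some_injective _ h3) ▸ List.getElem_mem h)
          · exact h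
          · exfalso
            have h1 : (Cβ ++ star :: restβ)[Cβ.length]? = some star := getElem?_mid _ _ _
            have h2 : (Cα ++ star :: restα)[Cβ.length]? = some Cα[Cβ.length] :=
              getElem?_pre _ _ _ h
            have h3 := take_eq_getElem? heq (x := Cβ.length) (by omega)
            rw [h1, h2] at h3
            exact hCα ((Option.some_injective _ h3).symm ▸ List.getElem_mem h)
        set b := Cα.length + 1 with hb
        have hLα2 : (Cα ++ star :: restα) = (Cα ++ [star]) ++ restα := by simp
        have hLβ2 : (Cβ ++ star :: restβ) = (Cβ ++ [star]) ++ restβ := by simp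
        have hrec : restα.take (κ - b) = restβ.take (κ - b) := by
          apply List.ext_getElem?
          intro x
          rw [List.getElem?_take, List.getElem?_take]
          by_cases hx : x < κ - b
          · rw [if_pos hx, if_pos hx]
            have h1 := take_eq_getElem? heq (x := x + b) (by omega)
            have e1 : (Cα ++ [star] ++ restα)[x + b]? = restα[x]? := by
              rw [List.getElem?_append_right (l₁ := Cα ++ [star]) (by simp only [List.length_append, List.length_cons, List.length_nil]; omega)]
              congr 1
              simp only [List.length_append, List.length_cons, List.length_nil]
              omega
            have e2 : (Cβ ++ [star] ++ restβ)[x + b]? = restβ[x]? := by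
              rw [List.getElem?_append_right (l₁ := Cβ ++ [star]) (by simp only [List.length_append, List.length_cons, List.length_nil]; omega)]
              congr 1
              simp only [List.length_append, List.length_cons, List.length_nil]
              omega
            rw [hLα2, e1, hLβ2, e2] at h1
            exact h1
          · rw [if_neg hx, if_neg hx]
        have hres := IH Bβ' Eα Eβ (κ - b) hlen' hBα' hBβ' hEα hEβ hE hrec
        have dα : (Cα ++ star :: restα).drop κ = restα.drop (κ - b) := by
          have h := List.drop_length_add_append (κ - b) (l₁ := Cα ++ [star]) (l₂ := restα)
          rw [show (Cα ++ [star]).length + (κ - b) = κ from by simp only [List.length_append, List.length_cons, List.length_nil]; omega] at h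
          rw [hLα2, h]
        have dβ : (Cβ ++ star :: restβ).drop κ = restβ.drop (κ - b) := by
          have h := List.drop_length_add_append (κ - b) (l₁ := Cβ ++ [star]) (l₂ := restβ)
          rw [show (Cβ ++ [star]).length + (κ - b) = κ from by simp only [List.length_append, List.length_cons, List.length_nil]; omega] at h
          rw [hLβ2, h]
        rw [dα, dβ]
        exact hres
      · exfalso
        have hx : Cα.length < Cβ.length := by omega
        have h1 : (Cα ++ star :: restα)[Cα.length]? = some star := getElem?_mid _ _ _
        have h2 : (Cβ ++ star :: restβ)[Cα.length]? = some Cβ[Cα.length] :=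
          getElem?_pre _ _ _ hx
        have h3 := take_eq_getElem? heq (x := Cα.length) (by omega)
        rw [h1, h2] at h3
        exact hCβ ((Option.some_injective _ h3) ▸ List.getElem_mem hx)
    · by_cases hbβ : Cβ.length + 1 ≤ κ
      · exfalso
        have hx : Cβ.length < Cα.length := by omega
        have h1 : (Cβ ++ star :: restβ)[Cβ.length]? = some star := getElem?_mid _ _ _
        have h2 : (Cα ++ star :: restα)[Cβ.length]? = some Cα[Cβ.length] :=
          getElem?_pre _ _ _ hx
        have h3 := take_eq_getElem? heq (x := Cβ.length) (by omega)
        rw [h1, h2] at h3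
        exact hCα ((Option.some_injective _ h3).symm ▸ List.getElem_mem hx)
      · have hκα : κ ≤ Cα.length := by omega
        have hκβ : κ ≤ Cβ.length := by omega
        have dα : (Cα ++ star :: restα).drop κ = (Cα.drop κ ++ [star]) ++ restα := by
          rw [show (Cα ++ star :: restα) = (Cα ++ [star]) ++ restα by simp,
            List.drop_append_of_le_length (by simp; omega),
            List.drop_append_of_le_length hκα]
        have dβ : (Cβ ++ star :: restβ).drop κ = (Cβ.drop κ ++ [star]) ++ restβ := by
          rw [show (Cβ ++ star :: restβ) = (Cβ ++ [star]) ++ restβ by simp,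
            List.drop_append_of_le_length (by simp; omega),
            List.drop_append_of_le_length hκβ]
        rw [dα, dβ]
        refine ⟨(Cα.drop κ ++ [star]) :: Bα', (Cβ.drop κ ++ [star]) :: Bβ', Eα, Eβ,
          by simp [hrα], by simp [hrβ], by simp [hlen'], ?_, ?_, hEα, hEβ, hE⟩
        · rintro c hc
          rcases List.mem_cons.mp hc with rfl | hc2
          · exact ⟨Cα.drop κ, rfl, fun h => hCα (List.drop_subset κ Cα h)⟩
          · exact hBα' c hc2
        · rintro c hc
          rcases List.mem_cons.mp hc with rfl | hc2
          · exact ⟨Cβ.drop κ, rfl, fun h => hCβ (List.drop_subset κ Cβ h)⟩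
          · exact hBβ' c hc2

lemma length_ADaux (κ : ℕ) : ∀ (ws : List (List A)) (s : List A),
    (ADaux κ s ws).length = ws.length
  | [], _ => rfl
  | w :: ws, s => by
      simp only [ADaux, List.length_cons, length_ADaux κ ws]

lemma ADaux_getElem? (κ : ℕ) : ∀ (ws : List (List A)) (s : List A) (t : ℕ) (w : List A),
    ws[t]? = some w →
    (ADaux κ s ws)[t]? = some ((w.reverse ++ stackFold κ s (ws.take t)).take κ)
  | [], s, t, w => by simp
  | w0 :: ws, s, 0, w => by
      intro hw
      simp only [List.getElem?_cons_zero, Option.some.injEq] at hw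
      subst hw
      simp [ADaux, stackFold]
  | w0 :: ws, s, t+1, w => by
      intro hw
      simp only [List.getElem?_cons_succ] at hw
      have h := ADaux_getElem? κ ws ((w0.reverse ++ s).drop κ) t w hw
      simp only [ADaux, List.getElem?_cons_succ, List.take_succ_cons]
      rw [h]
      rfl

lemma stackFold_take_succ (κ : ℕ) (ws : List (List A)) (t : ℕ) (w : List A)
    (hw : ws[t]? = some w) (s : List A) :
    stackFold κ s (ws.take (t+1)) = stepStack κ (stackFold κ s (ws.take t)) w := by
  rw [List.take_succ, hw]
  simp [stackFold, List.foldl_append]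

lemma lcpLen_nil_left [DecidableEq A] (v : List A) : lcpLen ([] : List A) v = 0 := by
  cases v <;> rfl

lemma lcpLen_nil_right [DecidableEq A] (u : List A) : lcpLen u ([] : List A) = 0 := by
  cases u <;> rfl

lemma lcpLen_cons [DecidableEq A] (a b : A) (u v : List A) :
    lcpLen (a :: u) (b :: v) = if a = b then lcpLen u v + 1 else 0 := rfl

lemma lcpLen_pointwise [DecidableEq A] (u : List A) :
    ∀ (v : List A) (t : ℕ), t < lcpLen u v → u[t]? = v[t]? := by
  induction u with
  | nil => intro v t h; rw [lcpLen_nil_left] at h; omega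
  | cons a u ih =>
    intro v t h
    cases v with
    | nil => rw [lcpLen_nil_right] at h; omega
    | cons b v =>
      rw [lcpLen_cons] at h
      by_cases hab : a = b
      · rw [if_pos hab] at h
        cases t with
        | zero => simp [hab]
        | succ t => simpa using ih v t (by omega)
      · rw [if_neg hab] at h; omega

end Stmt13Aux

open Stmt13Aux

/-- distinguishing sentences via Alice's Diary: let
α = pre ++ as and β = pre ++ bs be starred sentences whose (p+1)-st words differ.  Suppose
the j-th words of as and bs contain distinct letters at the same distance e+1 from the ends
of their words, whose tail-sentences have average word lengths N and N'.  If i ∈ ℕ₀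
satisfies j + i ≤ min(m,n) and κ ≥ N(m−j+1)/(i+1), κ ≥ N'(n−j+1)/(i+1), then
d(AD_κ(α), AD_κ(β)) ≥ d(α,β) − 2j − 2i  (where d(α,β) = m + n). -/
theorem stmt_13 {A : Type*} [DecidableEq A] (star : A) (κ : ℕ)
    (pre as bs : List (List A))
    (hα : StarredSentence star (pre ++ as)) (hβ : StarredSentence star (pre ++ bs))
    (has : as ≠ []) (hbs : bs ≠ []) (hne : as.head? ≠ bs.head?)
    (j : ℕ) (hj1 : 1 ≤ j) (hjm : j ≤ as.length) (hjn : j ≤ bs.length)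
    (wa wb : List A) (hwa : as[j - 1]? = some wa) (hwb : bs[j - 1]? = some wb)
    (e : ℕ) (la lb : A) (hla : wa.reverse[e]? = some la) (hlb : wb.reverse[e]? = some lb)
    (hll : la ≠ lb)
    (N N' : ℝ)
    (hN : ((e + 1 + (((pre ++ as).drop (pre.length + j)).map List.length).sum : ℕ) : ℝ)
        = N * ((as.length - j + 1 : ℕ) : ℝ))
    (hN' : ((e + 1 + (((pre ++ bs).drop (pre.length + j)).map List.length).sum : ℕ) : ℝ)
        = N' * ((bs.length - j + 1 : ℕ) : ℝ))
    (i : ℕ) (hi : j + i ≤ min as.length bs.length)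
    (hκ1 : N * ((as.length - j + 1 : ℕ) : ℝ) / ((i : ℝ) + 1) ≤ (κ : ℝ))
    (hκ2 : N' * ((bs.length - j + 1 : ℕ) : ℝ) / ((i : ℝ) + 1) ≤ (κ : ℝ)) :
    ((as.length + bs.length : ℕ) : ℝ) - 2 * j - 2 * i
        ≤ (treeDist (AD κ (pre ++ as)) (AD κ (pre ++ bs)) : ℝ) := by
  have hi1 : j + i ≤ as.length := le_trans hi (min_le_left _ _)
  have hi2 : j + i ≤ bs.length := le_trans hi (min_le_right _ _)
  set p := pre.length with hp
  set ws := pre ++ as with hws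
  set vs := pre ++ bs with hvs
  set D := p + j - 1 with hD
  have hwslen : ws.length = p + as.length := by simp [hws, hp]
  have hvslen : vs.length = p + bs.length := by simp [hvs, hp]
  -- letter positions
  obtain ⟨hea, hlaE⟩ : ∃ h : e < wa.reverse.length, wa.reverse[e] = la := by
    rw [← List.getElem?_eq_some_iff]; exact hla
  obtain ⟨heb, hlbE⟩ : ∃ h : e < wb.reverse.length, wb.reverse[e] = lb := by
    rw [← List.getElem?_eq_some_iff]; exact hlb
  have hea' : e < wa.length := by simpa using hea
  have heb' : e < wb.length := by simpa using heb
  -- the marked words sit at index D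
  have hDa : ws[D]? = some wa := by
    rw [hws, List.getElem?_append_right (by omega : pre.length ≤ D),
      show D - pre.length = j - 1 from by omega]
    exact hwa
  have hDb : vs[D]? = some wb := by
    rw [hvs, List.getElem?_append_right (by omega : pre.length ≤ D),
      show D - pre.length = j - 1 from by omega]
    exact hwb
  -- every word is starred
  have hSw : ∀ t w, ws[t]? = some w → ∃ u, w = star :: u ∧ star ∉ u :=
    fun t w h => hα w (List.mem_of_getElem? h)
  have hSv : ∀ t w, vs[t]? = some w → ∃ u, w = star :: u ∧ star ∉ u :=
    fun t w h => hβ w (List.mem_of_getElem? h)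
  -- star-free tops
  have hEstar : ∀ (w : List A), (∃ u, w = star :: u ∧ star ∉ u) → ∀ e', e' < w.length →
      star ∉ w.reverse.take e' := by
    rintro w ⟨u, rfl, hu⟩ e' he'
    simp only [List.length_cons] at he'
    rw [List.reverse_cons, List.take_append_of_le_length (by rw [List.length_reverse]; omega)]
    intro hmem
    exact hu (List.mem_reverse.mp (List.take_subset _ _ hmem))
  -- main step: bound the lcp of the diaries
  have hlcp : lcpLen (AD κ ws) (AD κ vs) ≤ p + j + i := by
    by_contra hcon
    push_neg at hcon
    have hch : ∀ t, t ≤ D + i → (AD κ ws)[t]? = (AD κ vs)[t]? :=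
      fun t ht => lcpLen_pointwise _ _ t (by omega)
    have hchap : ∀ t wα wβ, t ≤ D + i → ws[t]? = some wα → vs[t]? = some wβ →
        (wα.reverse ++ stackFold κ [] (ws.take t)).take κ
          = (wβ.reverse ++ stackFold κ [] (vs.take t)).take κ := by
      intro t wα wβ ht h1 h2
      have h := hch t ht
      rw [AD, AD, ADaux_getElem? κ ws [] t wα h1, ADaux_getElem? κ vs [] t wβ h2] at h
      exact Option.some_injective _ h
    have hwex : ∀ t, t ≤ D + i → ∃ w, ws[t]? = some w := by
      intro t ht
      have : t < ws.length := by omega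
      exact ⟨ws[t], List.getElem?_eq_getElem this⟩
    have hvex : ∀ t, t ≤ D + i → ∃ w, vs[t]? = some w := by
      intro t ht
      have : t < vs.length := by omega
      exact ⟨vs[t], List.getElem?_eq_getElem this⟩
    set Gα := wa.reverse.drop (e+1) ++ stackFold κ [] (ws.take D) with hGα
    set Gβ := wb.reverse.drop (e+1) ++ stackFold κ [] (vs.take D) with hGβ
    -- the invariant holds along days D .. D+i
    have main : ∀ r, r ≤ i → TS star la lb Gα Gβ
        (stackFold κ [] (ws.take (D + 1 + r))) (stackFold κ [] (vs.take (D + 1 + r))) := by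
      intro r
      induction r with
      | zero =>
        intro _
        have hsfα : stackFold κ [] (ws.take (D + 1 + 0)) =
            stepStack κ (stackFold κ [] (ws.take D)) wa := stackFold_take_succ κ ws D wa hDa []
        have hsfβ : stackFold κ [] (vs.take (D + 1 + 0)) =
            stepStack κ (stackFold κ [] (vs.take D)) wb := stackFold_take_succ κ vs D wb hDb []
        have hsplitα : wa.reverse = wa.reverse.take e ++ (la :: wa.reverse.drop (e+1)) := by
          conv_lhs => rw [← List.take_append_drop e wa.reverse]
          rw [List.drop_eq_getElem_cons hea, hlaE]
        have hsplitβ : wb.reverse = wb.reverse.take e ++ (lb :: wb.reverse.drop (e+1)) := by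
          conv_lhs => rw [← List.take_append_drop e wb.reverse]
          rw [List.drop_eq_getElem_cons heb, hlbE]
        have hLα : wa.reverse ++ stackFold κ [] (ws.take D)
            = ([] : List (List A)).flatten ++ (wa.reverse.take e ++ la :: Gα) := by
          conv_lhs => rw [hsplitα]
          simp [hGα]
        have hLβ : wb.reverse ++ stackFold κ [] (vs.take D)
            = ([] : List (List A)).flatten ++ (wb.reverse.take e ++ lb :: Gβ) := by
          conv_lhs => rw [hsplitβ]
          simp [hGβ]
        have heq := hchap D wa wb (by omega) hDa hDb
        rw [hLα, hLβ] at heq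
        have hcore := core star la lb hll Gα Gβ [] [] (wa.reverse.take e) (wb.reverse.take e)
          κ rfl (by simp) (by simp)
          (hEstar wa (hSw D wa hDa) e hea') (hEstar wb (hSv D wb hDb) e heb')
          (by rw [List.length_take, List.length_take, List.length_reverse,
                List.length_reverse]; omega)
          heq
        rw [hsfα, hsfβ, stepStack, stepStack, hLα, hLβ]
        exact hcore
      | succ r ih =>
        intro hr
        obtain ⟨Bα, Bβ, Eα, Eβ, h1, h2, h3, h4, h5, h6, h7, h8⟩ := ih (by omega)
        obtain ⟨wα, hwα⟩ := hwex (D+1+r) (by omega)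
        obtain ⟨wβ, hwβ⟩ := hvex (D+1+r) (by omega)
        obtain ⟨uα, rfl, huα⟩ := hSw _ _ hwα
        obtain ⟨uβ, rfl, huβ⟩ := hSv _ _ hwβ
        have hsfα : stackFold κ [] (ws.take (D + 1 + (r+1))) =
            stepStack κ (stackFold κ [] (ws.take (D+1+r))) (star :: uα) := by
          rw [show D + 1 + (r+1) = (D+1+r) + 1 from by omega]
          exact stackFold_take_succ κ ws (D+1+r) _ hwα []
        have hsfβ : stackFold κ [] (vs.take (D + 1 + (r+1))) =
            stepStack κ (stackFold κ [] (vs.take (D+1+r))) (star :: uβ) := by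
          rw [show D + 1 + (r+1) = (D+1+r) + 1 from by omega]
          exact stackFold_take_succ κ vs (D+1+r) _ hwβ []
        have hLα : (star :: uα).reverse ++ stackFold κ [] (ws.take (D+1+r))
            = ((uα.reverse ++ [star]) :: Bα).flatten ++ (Eα ++ la :: Gα) := by
          rw [h1, List.reverse_cons]
          simp
        have hLβ : (star :: uβ).reverse ++ stackFold κ [] (vs.take (D+1+r))
            = ((uβ.reverse ++ [star]) :: Bβ).flatten ++ (Eβ ++ lb :: Gβ) := by
          rw [h2, List.reverse_cons]
          simp
        have heq := hchap (D+1+r) _ _ (by omega) hwα hwβ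
        rw [hLα, hLβ] at heq
        have hcore := core star la lb hll Gα Gβ ((uα.reverse ++ [star]) :: Bα)
          ((uβ.reverse ++ [star]) :: Bβ) Eα Eβ κ (by simp [h3])
          (by rintro c hc
              rcases List.mem_cons.mp hc with rfl | hc2
              · exact ⟨uα.reverse, rfl, fun h => huα (List.mem_reverse.mp h)⟩
              · exact h4 c hc2)
          (by rintro c hc
              rcases List.mem_cons.mp hc with rfl | hc2
              · exact ⟨uβ.reverse, rfl, fun h => huβ (List.mem_reverse.mp h)⟩
              · exact h5 c hc2)
          h6 h7 h8 heq
        rw [hsfα, hsfβ, stepStack, stepStack, hLα, hLβ]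
        exact hcore
    -- capacity contradiction
    set O := (stackFold κ [] (ws.take D)).length with hO
    have hGlen : Gα.length = (wa.length - (e+1)) + O := by
      rw [hGα]
      simp only [List.length_append, List.length_drop, List.length_reverse, hO]
    have hlenstack : ∀ r, r ≤ i →
        1 + Gα.length ≤ (stackFold κ [] (ws.take (D+1+r))).length := by
      intro r hr
      obtain ⟨Bα, Bβ, Eα, Eβ, h1, _, _, _, _, _, _, _⟩ := main r hr
      rw [h1]
      simp only [List.length_append, List.length_cons]
      omega
    set tail := ws.drop (D+1) with htail
    have hCI : ∀ r, r ≤ i → (stackFold κ [] (ws.take (D+1+r))).length + κ * (r+1)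
        = O + wa.length + ((tail.take r).map List.length).sum := by
      intro r
      induction r with
      | zero =>
        intro _
        have hsfα : stackFold κ [] (ws.take (D + 1 + 0)) =
            stepStack κ (stackFold κ [] (ws.take D)) wa := stackFold_take_succ κ ws D wa hDa []
        have hx : (stackFold κ [] (ws.take (D+1+0))).length
            = (wa.length + O) - κ := by
          rw [hsfα, stepStack]
          simp only [List.length_drop, List.length_append, List.length_reverse, hO]
        have hge := hlenstack 0 (by omega)
        simp only [List.take_zero, List.map_nil, List.sum_nil]
        omega
      | succ r ih =>
        intro hr
        obtain ⟨w, hw⟩ := hwex (D+1+r) (by omega)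
        have hsfα : stackFold κ [] (ws.take (D + 1 + (r+1))) =
            stepStack κ (stackFold κ [] (ws.take (D+1+r))) w := by
          rw [show D + 1 + (r+1) = (D+1+r) + 1 from by omega]
          exact stackFold_take_succ κ ws (D+1+r) _ hw []
        have hx : (stackFold κ [] (ws.take (D+1+(r+1)))).length
            = (w.length + (stackFold κ [] (ws.take (D+1+r))).length) - κ := by
          rw [hsfα, stepStack]
          simp only [List.length_drop, List.length_append, List.length_reverse]
        have htr : tail[r]? = some w := by
          rw [htail, List.getElem?_drop]
          exact hw
        have hsum : ((tail.take (r+1)).map List.length).sum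
            = ((tail.take r).map List.length).sum + w.length := by
          rw [List.take_succ, htr]
          simp
        have hge := hlenstack (r+1) hr
        have hge' := hlenstack r (by omega)
        have ihr := ih (by omega)
        rw [hsum]
        have hκm : κ * (r+1+1) = κ * (r+1) + κ := by ring
        omega
    have hfin := hCI i le_rfl
    have hge := hlenstack i le_rfl
    -- partial tail sum is at most the full tail sum
    have hD1 : D + 1 = p + j := by omega
    have hsum_le : ((tail.take i).map List.length).sum
        ≤ ((ws.drop (p + j)).map List.length).sum := by
      rw [← hD1, ← htail,
        show tail.map List.length
          = (tail.take i).map List.length ++ (tail.drop i).map List.length from by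
            rw [← List.map_append, List.take_append_drop],
        List.sum_append]
      exact Nat.le_add_right _ _
    -- capacity in ℕ
    have hcapℕ : e + 1 + ((ws.drop (p + j)).map List.length).sum ≤ κ * (i+1) := by
      have hpos : (0:ℝ) < (i:ℝ) + 1 := by positivity
      rw [div_le_iff₀ hpos] at hκ1
      rw [← hN] at hκ1
      have hcast : ((e + 1 + ((ws.drop (p + j)).map List.length).sum : ℕ) : ℝ)
          ≤ ((κ * (i+1) : ℕ) : ℝ) := by push_cast; push_cast at hκ1; linarith
      exact_mod_cast hcast
    omega
  -- final arithmetic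
  have hlen1 : (AD κ ws).length = p + as.length := by
    rw [AD, length_ADaux, hwslen]
  have hlen2 : (AD κ vs).length = p + bs.length := by
    rw [AD, length_ADaux, hvslen]
  have htd : treeDist (AD κ ws) (AD κ vs)
      = (p + as.length) + (p + bs.length) - 2 * lcpLen (AD κ ws) (AD κ vs) := by
    rw [treeDist, hlen1, hlen2]
  have hmn : as.length + bs.length ≤ treeDist (AD κ ws) (AD κ vs) + 2*j + 2*i := by
    rw [htd]; omega
  have hcast : ((as.length + bs.length : ℕ) : ℝ)
      ≤ (treeDist (AD κ ws) (AD κ vs) : ℝ) + 2*j + 2*i := by exact_mod_cast hmn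
  push_cast at hcast ⊢
  linarith
end

section
/- In the hexagonal hyperbolic Coxeter group G = ⟨a₁,a₂,a₃,b₁,b₂,b₃ | a_i² = b_i² = e, [a_k, b_l] = e for k ≠ l⟩ with generating set S = {a₁,a₂,a₃,b₁,b₂,b₃}: the map F = F_A × F_B : G → T_W × T_W is an isometric embedding, where F_A(g) is the sentence obtained by cutting the a-left representation of g after each A-letter, F_B is defined analogously with roles of A = {a₁,a₂,a₃} and B = {b₁,b₂,b₃} swapped, T_W is the sentence-tree on nonempty words over S, and T_W × T_W carries the ℓ¹ metric. -/
/-- Generators of the hexagonal hyperbolic Coxeter group: (false, i) is aᵢ₊₁ and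
(true, i) is bᵢ₊₁. -/
abbrev HexGen : Type := Bool × Fin 3

/-- Relators: each generator squares to the identity, and a_k commutes with b_l for k ≠ l. -/
def hexRels : Set (FreeGroup HexGen) :=
  {r | (∃ x : HexGen, r = FreeGroup.of x * FreeGroup.of x) ∨
       (∃ k l : Fin 3, k ≠ l ∧
          r = FreeGroup.of (false, k) * FreeGroup.of (true, l) *
              (FreeGroup.of (false, k))⁻¹ * (FreeGroup.of (true, l))⁻¹)}

/-- The hexagonal hyperbolic Coxeter group
G = ⟨a₁,a₂,a₃,b₁,b₂,b₃ | aᵢ² = bᵢ² = e, [a_k,b_l] = e for k ≠ l⟩. -/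
abbrev Hex : Type := PresentedGroup hexRels

/-- Evaluation of a word in the generators in the group. -/
def evalWord (w : List HexGen) : Hex :=
  (w.map (fun x => (PresentedGroup.of x : Hex))).prod

/-- Word metric on Hex with respect to the generating set S = {a₁,a₂,a₃,b₁,b₂,b₃}
(each generator is its own inverse). -/
noncomputable def wordDist (g h : Hex) : ℕ :=
  sInf {n : ℕ | ∃ w : List HexGen, w.length = n ∧ evalWord w = g⁻¹ * h}

/-- w is a geodesic word representing g. -/
def IsGeodesicWord (g : Hex) (w : List HexGen) : Prop :=
  evalWord w = g ∧ ∀ w' : List HexGen, evalWord w' = g → w.length ≤ w'.length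

/-- All A-letters are commuted as far left as possible: no adjacent pair b_l a_k with
k ≠ l occurs. -/
def IsALeft (w : List HexGen) : Prop :=
  ∀ (s : ℕ) (k l : Fin 3), k ≠ l →
    ¬(w[s]? = some (true, l) ∧ w[s + 1]? = some (false, k))

/-- All B-letters are commuted as far left as possible. -/
def IsBLeft (w : List HexGen) : Prop :=
  ∀ (s : ℕ) (k l : Fin 3), k ≠ l →
    ¬(w[s]? = some (false, k) ∧ w[s + 1]? = some (true, l))

/-- Cut a word into blocks, each ending with a letter of type p (p = false : after each
A-letter; p = true : after each B-letter); a trailing block with no such letter is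
discarded. -/
def cutAux (p : Bool) : List HexGen → List HexGen → List (List HexGen)
  | _, [] => []
  | cur, x :: xs =>
      if x.1 = p then (cur ++ [x]) :: cutAux p [] xs else cutAux p (cur ++ [x]) xs

/-! ### Auxiliary development -/

namespace HexAux

open List

/-- Basic relations in `Hex`. -/
theorem of_mul_self (x : HexGen) : (PresentedGroup.of x : Hex) * PresentedGroup.of x = 1 := by
  have h : FreeGroup.of x * FreeGroup.of x ∈ hexRels := Or.inl ⟨x, rfl⟩
  have h2 : PresentedGroup.mk hexRels (FreeGroup.of x * FreeGroup.of x) = 1 :=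
    (QuotientGroup.eq_one_iff _).mpr (Subgroup.subset_normalClosure h)
  simpa [map_mul, PresentedGroup.of] using h2

theorem of_inv (x : HexGen) : (PresentedGroup.of x : Hex)⁻¹ = PresentedGroup.of x :=
  inv_eq_of_mul_eq_one_right (of_mul_self x)

theorem of_comm {k l : Fin 3} (h : k ≠ l) :
    (PresentedGroup.of (false, k) : Hex) * PresentedGroup.of (true, l) =
      PresentedGroup.of (true, l) * PresentedGroup.of (false, k) := by
  have hr : FreeGroup.of ((false, k) : HexGen) * FreeGroup.of (true, l) *
      (FreeGroup.of (false, k))⁻¹ * (FreeGroup.of (true, l))⁻¹ ∈ hexRels := Or.inr ⟨k, l, h, rfl⟩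
  have h2 : PresentedGroup.mk hexRels (FreeGroup.of ((false, k) : HexGen) * FreeGroup.of (true, l) *
      (FreeGroup.of (false, k))⁻¹ * (FreeGroup.of (true, l))⁻¹) = 1 :=
    (QuotientGroup.eq_one_iff _).mpr (Subgroup.subset_normalClosure hr)
  have h3 : (PresentedGroup.of (false, k) : Hex) * PresentedGroup.of (true, l) *
      (PresentedGroup.of (false, k) : Hex)⁻¹ * (PresentedGroup.of (true, l) : Hex)⁻¹ = 1 := by
    simpa [map_mul, map_inv, PresentedGroup.of] using h2
  have h4 := mul_inv_eq_one.mp h3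
  exact mul_inv_eq_iff_eq_mul.mp h4

theorem evalWord_nil : evalWord [] = 1 := rfl

theorem evalWord_cons (x : HexGen) (w : List HexGen) :
    evalWord (x :: w) = PresentedGroup.of x * evalWord w := by
  simp [evalWord]

theorem evalWord_append (u v : List HexGen) :
    evalWord (u ++ v) = evalWord u * evalWord v := by
  simp [evalWord]

theorem evalWord_reverse (w : List HexGen) : evalWord w.reverse = (evalWord w)⁻¹ := by
  induction w with
  | nil => simp [evalWord]
  | cons x w ih =>
    rw [reverse_cons, evalWord_append, evalWord_cons, ih, evalWord_cons, mul_inv_rev, of_inv]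
    simp [evalWord]

end HexAux
namespace HexAux

/-- The normality relation between adjacent letters: distinct, and no `b_l` immediately
followed by `a_k` with `k ≠ l`. -/
def Q (x y : HexGen) : Prop := x ≠ y ∧ (x.1 = true → y.1 = false → x.2 = y.2)

/-- Normal words: geodesic a-left words. -/
def HNormal (w : List HexGen) : Prop := List.Chain' Q w

theorem HNormal.tail {x : HexGen} {w : List HexGen} (h : HNormal (x :: w)) : HNormal w :=
  (List.isChain_cons.mp h).2

/-- Prepending an A-letter to a normal word. -/
def insA (k : Fin 3) (w : List HexGen) : List HexGen :=
  match w with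
  | ⟨false, k'⟩ :: t => if k' = k then t else (false, k) :: ⟨false, k'⟩ :: t
  | _ => (false, k) :: w

/-- Prepending a B-letter to a normal word. -/
def insB (l : Fin 3) : List HexGen → List HexGen
  | [] => [(true, l)]
  | y :: t =>
    if y.1 = false ∧ y.2 ≠ l then y :: insB l t
    else if y = (true, l) then t
    else (true, l) :: y :: t

/-- Prepending a letter to a normal word. -/
def insL (x : HexGen) (w : List HexGen) : List HexGen :=
  if x.1 = false then insA x.2 w else insB x.2 w

@[simp] theorem insA_nil (k : Fin 3) : insA k [] = [(false, k)] := rfl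

@[simp] theorem insA_b (k l : Fin 3) (t : List HexGen) :
    insA k ((true, l) :: t) = (false, k) :: (true, l) :: t := rfl

@[simp] theorem insA_same (k : Fin 3) (t : List HexGen) : insA k ((false, k) :: t) = t := by
  simp [insA]

theorem insA_ne {k k' : Fin 3} (h : k' ≠ k) (t : List HexGen) :
    insA k ((false, k') :: t) = (false, k) :: (false, k') :: t := by
  simp [insA, h]

@[simp] theorem insB_nil (l : Fin 3) : insB l [] = [(true, l)] := by simp [insB]

theorem insB_skip {j l : Fin 3} (h : j ≠ l) (t : List HexGen) :
    insB l ((false, j) :: t) = (false, j) :: insB l t := by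
  simp [insB, h]

@[simp] theorem insB_al (l : Fin 3) (t : List HexGen) :
    insB l ((false, l) :: t) = (true, l) :: (false, l) :: t := by
  simp [insB]

@[simp] theorem insB_cancel (l : Fin 3) (t : List HexGen) : insB l ((true, l) :: t) = t := by
  simp [insB]

theorem insB_b_ne {m l : Fin 3} (h : m ≠ l) (t : List HexGen) :
    insB l ((true, m) :: t) = (true, l) :: (true, m) :: t := by
  simp [insB, h]

@[simp] theorem insL_a (k : Fin 3) (w : List HexGen) : insL (false, k) w = insA k w := rfl

@[simp] theorem insL_b (l : Fin 3) (w : List HexGen) : insL (true, l) w = insB l w := rfl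

theorem eval_insA (k : Fin 3) (w : List HexGen) :
    evalWord (insA k w) = PresentedGroup.of (false, k) * evalWord w := by
  match w with
  | [] => simp [evalWord_cons]
  | ⟨true, l⟩ :: t => simp [evalWord_cons]
  | ⟨false, k'⟩ :: t =>
    by_cases h : k' = k
    · subst h
      rw [insA_same, evalWord_cons, ← mul_assoc, of_mul_self, one_mul]
    · rw [insA_ne h, evalWord_cons]

theorem eval_insB (l : Fin 3) (w : List HexGen) :
    evalWord (insB l w) = PresentedGroup.of (true, l) * evalWord w := by
  induction w with
  | nil => simp [evalWord_cons]
  | cons y t ih =>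
    obtain ⟨b, m⟩ := y
    cases b
    · by_cases h : m = l
      · subst h; rw [insB_al, evalWord_cons]
      · rw [insB_skip h, evalWord_cons, ih, evalWord_cons, ← mul_assoc, ← mul_assoc,
          of_comm h]
    · by_cases h : m = l
      · subst h
        rw [insB_cancel, evalWord_cons, ← mul_assoc, of_mul_self, one_mul]
      · rw [insB_b_ne h, evalWord_cons]

theorem eval_insL (x : HexGen) (w : List HexGen) :
    evalWord (insL x w) = PresentedGroup.of x * evalWord w := by
  obtain ⟨b, m⟩ := x
  cases b
  · exact eval_insA m w
  · exact eval_insB m w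

end HexAux
namespace HexAux

theorem mem_of_getLast? {α : Type*} {l : List α} {x : α} (h : x ∈ l.getLast?) : x ∈ l := by
  rcases List.mem_getLast?_eq_getLast h with ⟨hne, rfl⟩
  exact List.getLast_mem hne

/-- Structure of `insB l w`: either it deletes a `b_l` behind a run of commuting A-letters,
or it inserts `b_l` behind such a run. -/
theorem insB_spec (l : Fin 3) (w : List HexGen) :
    (∃ α t, w = α ++ (true, l) :: t ∧ (∀ y ∈ α, y.1 = false ∧ y.2 ≠ l) ∧
        insB l w = α ++ t) ∨
    (∃ α t, w = α ++ t ∧ (∀ y ∈ α, y.1 = false ∧ y.2 ≠ l) ∧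
        insB l w = α ++ (true, l) :: t ∧
        (t = [] ∨ ∃ z t₂, t = z :: t₂ ∧ (z.1 = false → z.2 = l) ∧ z ≠ (true, l))) := by
  induction w with
  | nil =>
    right
    exact ⟨[], [], rfl, by simp, by simp, Or.inl rfl⟩
  | cons y t ih =>
    by_cases h1 : y.1 = false ∧ y.2 ≠ l
    · have hstep : insB l (y :: t) = y :: insB l t := by
        obtain ⟨c, m⟩ := y
        simp only at h1
        obtain ⟨hc, hm⟩ := h1
        subst hc
        exact insB_skip hm t
      rcases ih with ⟨α, s, hts, hα, hins⟩ | ⟨α, s, hts, hα, hins, hlast⟩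
      · left
        exact ⟨y :: α, s, by rw [hts]; rfl, by
          intro z hz
          rcases List.mem_cons.mp hz with rfl | hz
          · exact h1
          · exact hα z hz, by rw [hstep, hins]; rfl⟩
      · right
        exact ⟨y :: α, s, by rw [hts]; rfl, by
          intro z hz
          rcases List.mem_cons.mp hz with rfl | hz
          · exact h1
          · exact hα z hz, by rw [hstep, hins]; rfl, hlast⟩
    · by_cases h2 : y = (true, l)
      · left
        refine ⟨[], t, by rw [h2]; rfl, by simp, ?_⟩
        rw [h2, insB_cancel]
        rfl
      · right
        refine ⟨[], y :: t, rfl, by simp, ?_, ?_⟩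
        · show insB l (y :: t) = (true, l) :: y :: t
          rw [insB]
          rw [if_neg h1, if_neg h2]
        · right
          refine ⟨y, t, rfl, ?_, h2⟩
          intro hf
          by_contra hne
          exact h1 ⟨hf, hne⟩

theorem insA_normal (k : Fin 3) (w : List HexGen) (h : HNormal w) : HNormal (insA k w) := by
  match w with
  | [] => exact List.isChain_singleton _
  | ⟨false, k'⟩ :: t =>
    by_cases hk : k' = k
    · subst hk
      rw [insA_same]
      exact h.tail
    · rw [insA_ne hk]
      exact List.isChain_cons_cons.mpr ⟨⟨by simp [Ne.symm hk], by simp⟩, h⟩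
  | ⟨true, m⟩ :: t =>
    rw [insA_b]
    exact List.isChain_cons_cons.mpr ⟨⟨by simp, by simp⟩, h⟩

theorem insB_normal (l : Fin 3) (w : List HexGen) (h : HNormal w) : HNormal (insB l w) := by
  rcases insB_spec l w with ⟨α, t, hw, hα, hins⟩ | ⟨α, t, hw, hα, hins, hlast⟩
  · rw [hins]
    subst hw
    obtain ⟨h1, h2, h3⟩ := List.isChain_append.mp h
    refine List.isChain_append.mpr ⟨h1, h2.tail, ?_⟩
    intro x hx y hy
    have hxα := hα x (mem_of_getLast? hx)
    have hQ : Q (true, l) y := (List.isChain_cons.mp h2).1 y hy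
    obtain ⟨c, j⟩ := y
    cases c
    · have hj : j = l := by
        have := hQ.2 rfl rfl
        simpa using this.symm
      refine ⟨?_, by simp [hxα.1]⟩
      intro hxy
      apply hα x (mem_of_getLast? hx) |>.2
      rw [hxy]
      simpa using hj
    · refine ⟨?_, by simp [hxα.1]⟩
      intro hxy
      have := hxα.1
      rw [hxy] at this
      simp at this
  · rw [hins]
    subst hw
    obtain ⟨h1, h2, h3⟩ := List.isChain_append.mp h
    refine List.isChain_append.mpr ⟨h1, ?_, ?_⟩
    · refine List.isChain_cons.mpr ⟨?_, h2⟩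
      intro y hy
      rcases hlast with rfl | ⟨z, t₂, rfl, hz1, hz2⟩
      · simp at hy
      · simp at hy
        subst hy
        refine ⟨Ne.symm hz2, ?_⟩
        intro _ hzf
        exact (hz1 hzf).symm
    · intro x hx y hy
      simp at hy
      subst hy
      have hxα := hα x (mem_of_getLast? hx)
      refine ⟨?_, by simp [hxα.1]⟩
      intro hxy
      have := hxα.1
      rw [hxy] at this
      simp at this

theorem insL_normal (x : HexGen) (w : List HexGen) (h : HNormal w) : HNormal (insL x w) := by
  obtain ⟨c, m⟩ := x
  cases c
  · exact insA_normal m w h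
  · exact insB_normal m w h

theorem insA_insA (k : Fin 3) (w : List HexGen) (h : HNormal w) : insA k (insA k w) = w := by
  rcases w with _ | ⟨⟨c, k'⟩, t⟩
  · simp
  cases c
  · by_cases hk : k' = k
    · subst hk
      rw [insA_same]
      rcases t with _ | ⟨⟨c', j⟩, t₂⟩
      · simp
      have hQ := (List.isChain_cons_cons.mp h).1
      cases c'
      · have hj : j ≠ k' := fun hj => hQ.1 (by rw [hj])
        rw [insA_ne hj]
      · rw [insA_b]
    · rw [insA_ne hk, insA_same]
  · rw [insA_b, insA_same]

theorem insB_insB (l : Fin 3) (w : List HexGen) (h : HNormal w) : insB l (insB l w) = w := by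
  induction w with
  | nil => simp
  | cons y t ih =>
    obtain ⟨c, m⟩ := y
    cases c
    · by_cases hm : m = l
      · subst hm
        rw [insB_al, insB_cancel]
      · rw [insB_skip hm, insB_skip hm, ih h.tail]
    · by_cases hm : m = l
      · subst hm
        rw [insB_cancel]
        rcases t with _ | ⟨⟨c', j⟩, t₂⟩
        · simp
        have hQ := (List.isChain_cons_cons.mp h).1
        cases c'
        · have hj := (hQ.2 rfl rfl).symm
          simp only at hj
          subst hj
          rw [insB_al]
        · have hj : j ≠ m := fun hj => hQ.1 (by rw [hj])
          rw [insB_b_ne hj]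
      · rw [insB_b_ne hm, insB_cancel]

theorem insAB_comm {k l : Fin 3} (hkl : k ≠ l) (w : List HexGen) (hw : HNormal w) :
    insA k (insB l w) = insB l (insA k w) := by
  rcases w with _ | ⟨⟨c, j⟩, t⟩
  · simp [insB_skip hkl]
  cases c
  · by_cases hj : j = k
    · subst hj
      rw [insA_same, insB_skip hkl, insA_same]
    · rw [insA_ne hj, insB_skip hkl]
      by_cases hjl : j = l
      · subst hjl
        rw [insB_al, insA_b]
      · rw [insB_skip hjl, insA_ne hj]
  · rw [insA_b, insB_skip hkl]
    by_cases hm : j = l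
    · subst hm
      rw [insB_cancel]
      rcases t with _ | ⟨⟨c', i⟩, t₂⟩
      · simp
      have hQ := (List.isChain_cons_cons.mp hw).1
      cases c'
      · have hi := (hQ.2 rfl rfl).symm
        simp only at hi
        subst hi
        exact insA_ne (Ne.symm hkl) t₂
      · rw [insA_b]
    · rw [insB_b_ne hm, insA_b]

theorem insL_head (x : HexGen) (w : List HexGen) (h : HNormal (x :: w)) : insL x w = x :: w := by
  obtain ⟨c, m⟩ := x
  cases c
  · rcases w with _ | ⟨⟨c', j⟩, t⟩
    · rfl
    have hQ := (List.isChain_cons_cons.mp h).1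
    cases c'
    · have hj : j ≠ m := fun hj => hQ.1 (by rw [hj])
      simp [insA_ne hj]
    · simp
  · rcases w with _ | ⟨⟨c', j⟩, t⟩
    · rfl
    have hQ := (List.isChain_cons_cons.mp h).1
    cases c'
    · have hj := (hQ.2 rfl rfl).symm
      simp only at hj
      subst hj
      simp
    · have hj : j ≠ m := fun hj => hQ.1 (by rw [hj])
      simp [insB_b_ne hj]

end HexAux
namespace HexAux

/-- The set of normal words. -/
def M : Type := {w : List HexGen // HNormal w}

def insM (x : HexGen) (m : M) : M := ⟨insL x m.1, insL_normal x m.1 m.2⟩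

theorem insM_invol (x : HexGen) : ∀ m : M, insM x (insM x m) = m := by
  rintro ⟨w, hw⟩
  apply Subtype.ext
  obtain ⟨c, i⟩ := x
  cases c
  · exact insA_insA i w hw
  · exact insB_insB i w hw

/-- Each generator acts on normal words as an involutive permutation. -/
def permIns (x : HexGen) : Equiv.Perm M :=
  ⟨insM x, insM x, insM_invol x, insM_invol x⟩

theorem permIns_sq (x : HexGen) : permIns x * permIns x = 1 :=
  Equiv.ext fun m => insM_invol x m

theorem permIns_comm {k l : Fin 3} (h : k ≠ l) :
    permIns (false, k) * permIns (true, l) = permIns (true, l) * permIns (false, k) :=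
  Equiv.ext fun ⟨w, hw⟩ => Subtype.ext (insAB_comm h w hw)

theorem comm_helper {G : Type*} [Group G] {a b : G} (h : a * b = b * a) :
    a * b * a⁻¹ * b⁻¹ = 1 := by
  rw [h]; group

theorem hexRels_check : ∀ r ∈ hexRels, FreeGroup.lift permIns r = 1 := by
  intro r hr
  rcases hr with ⟨x, rfl⟩ | ⟨k, l, hkl, rfl⟩
  · rw [map_mul, FreeGroup.lift_apply_of]
    exact permIns_sq x
  · rw [map_mul, map_mul, map_mul, map_inv, map_inv, FreeGroup.lift_apply_of, FreeGroup.lift_apply_of]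
    exact comm_helper (permIns_comm hkl)

/-- The action of `Hex` on normal words. -/
noncomputable def phi : Hex →* Equiv.Perm M := PresentedGroup.toGroup hexRels_check

def mnil : M := ⟨[], List.isChain_nil⟩

/-- Normal form of a word, computed through the action of `Hex`. -/
noncomputable def NF (w : List HexGen) : M := phi (evalWord w) mnil

noncomputable def N (w : List HexGen) : List HexGen := (NF w).1

theorem NF_nil : NF [] = mnil := by
  rw [NF, evalWord_nil, map_one]
  rfl

theorem phi_of (x : HexGen) : phi (PresentedGroup.of x) = permIns x := by
  unfold phi
  exact PresentedGroup.toGroup.of hexRels_check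

theorem NF_cons (x : HexGen) (w : List HexGen) : NF (x :: w) = insM x (NF w) := by
  rw [NF, evalWord_cons, map_mul, Equiv.Perm.mul_apply, phi_of]
  rfl

theorem NF_congr {v w : List HexGen} (h : evalWord v = evalWord w) : NF v = NF w := by
  rw [NF, NF, h]

theorem N_normal (w : List HexGen) : HNormal (N w) := (NF w).2

theorem N_nil : N [] = [] := by rw [N, NF_nil]; rfl

theorem N_cons (x : HexGen) (w : List HexGen) : N (x :: w) = insL x (N w) := by
  rw [N, NF_cons]; rfl

theorem eval_N (w : List HexGen) : evalWord (N w) = evalWord w := by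
  induction w with
  | nil => rw [N_nil]
  | cons x w ih => rw [N_cons, eval_insL, ih, evalWord_cons]

theorem N_of_normal {w : List HexGen} (h : HNormal w) : N w = w := by
  induction w with
  | nil => exact N_nil
  | cons x w ih => rw [N_cons, ih h.tail, insL_head x w h]

/-- Number of letters of type `p`. -/
def cnt (p : Bool) (w : List HexGen) : ℕ := w.countP (fun y => y.1 == p)

theorem cnt_nil (p : Bool) : cnt p [] = 0 := rfl

theorem cnt_cons (p : Bool) (y : HexGen) (w : List HexGen) :
    cnt p (y :: w) = cnt p w + (if y.1 == p then 1 else 0) := by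
  simp only [cnt, List.countP_cons]

theorem cnt_append (p : Bool) (u v : List HexGen) : cnt p (u ++ v) = cnt p u + cnt p v := by
  simp only [cnt, List.countP_append]

theorem cnt_total (w : List HexGen) : cnt false w + cnt true w = w.length := by
  induction w with
  | nil => rfl
  | cons y t ih =>
    rw [cnt_cons, cnt_cons, List.length_cons]
    rcases y with ⟨c, m⟩
    cases c <;> simp <;> omega

theorem insL_dich (x : HexGen) (w : List HexGen) :
    ((insL x w).length = w.length + 1 ∧
      ∀ p, cnt p (insL x w) = cnt p w + (if x.1 == p then 1 else 0)) ∨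
    ((insL x w).length + 1 = w.length ∧
      ∀ p, cnt p (insL x w) + (if x.1 == p then 1 else 0) = cnt p w) := by
  obtain ⟨c, m⟩ := x
  cases c
  · rcases w with _ | ⟨⟨c', j⟩, t⟩
    · left
      exact ⟨rfl, fun p => by simp [cnt_cons, cnt_nil]⟩
    · cases c'
      · by_cases hj : j = m
        · subst hj
          right
          refine ⟨by simp, fun p => ?_⟩
          rw [insL_a, insA_same, cnt_cons]
        · left
          refine ⟨by simp [insA_ne hj], fun p => ?_⟩
          rw [insL_a, insA_ne hj, cnt_cons]
      · left
        refine ⟨by simp, fun p => ?_⟩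
        rw [insL_a, insA_b, cnt_cons]
  · rw [insL_b]
    rcases insB_spec m w with ⟨α, t, hw, hα, hins⟩ | ⟨α, t, hw, hα, hins, _⟩
    · right
      subst hw
      rw [hins]
      constructor
      · simp; omega
      · intro p
        rw [cnt_append, cnt_append, cnt_cons]
        simp only [Prod.fst]
        omega
    · left
      subst hw
      rw [hins]
      constructor
      · simp; omega
      · intro p
        rw [cnt_append, cnt_append, cnt_cons]
        simp only [Prod.fst]
        omega

theorem N_length_le (w : List HexGen) : (N w).length ≤ w.length := by
  induction w with
  | nil => rw [N_nil]
  | cons x w ih =>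
    rw [N_cons]
    rcases insL_dich x (N w) with ⟨hl, _⟩ | ⟨hl, _⟩ <;> rw [List.length_cons] <;> omega

theorem N_cnt_of_length {w : List HexGen} (h : (N w).length = w.length) (p : Bool) :
    cnt p (N w) = cnt p w := by
  induction w with
  | nil => rw [N_nil]
  | cons x w ih =>
    have hle := N_length_le w
    rw [N_cons] at h ⊢
    rcases insL_dich x (N w) with ⟨hl, hc⟩ | ⟨hl, hc⟩
    · have hNw : (N w).length = w.length := by rw [List.length_cons] at h; omega
      rw [hc p, ih hNw, cnt_cons]
    · rw [List.length_cons] at h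
      omega

end HexAux
namespace HexAux

theorem mh_mh {α : Type*} (L : List α) (f g : α → α) :
    (L.modifyHead g).modifyHead f = L.modifyHead (f ∘ g) := by
  cases L <;> rfl

theorem cutAux_acc (p : Bool) (cur : List HexGen) (w : List HexGen) :
    cutAux p cur w = (cutAux p [] w).modifyHead (cur ++ ·) := by
  induction w generalizing cur with
  | nil => rfl
  | cons x xs ih =>
    by_cases hx : x.1 = p
    · simp only [cutAux, if_pos hx]
      simp
    · simp only [cutAux, if_neg hx]
      rw [ih (cur ++ [x]), ih ([] ++ [x]), mh_mh]
      congr 1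
      funext y
      simp

theorem cutA_cons_a {x : HexGen} (hx : x.1 = false) (w : List HexGen) :
    cutAux false [] (x :: w) = [x] :: cutAux false [] w := by
  simp [cutAux, hx]

theorem cutA_cons_b {x : HexGen} (hx : x.1 = true) (w : List HexGen) :
    cutAux false [] (x :: w) = (cutAux false [] w).modifyHead (x :: ·) := by
  simp only [cutAux, if_neg (by simp [hx] : ¬x.1 = false)]
  rw [cutAux_acc]
  congr 1

theorem cut_length (p : Bool) (w : List HexGen) : ∀ cur, (cutAux p cur w).length = cnt p w := by
  induction w with
  | nil => intro cur; rfl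
  | cons x xs ih =>
    intro cur
    by_cases hx : x.1 = p
    · simp only [cutAux, if_pos hx, List.length_cons, ih, cnt_cons]
      simp [hx]
    · simp only [cutAux, if_neg hx, ih, cnt_cons]
      simp [hx]

theorem lcpLen_nil_left {A : Type*} [DecidableEq A] (L : List A) : lcpLen [] L = 0 := by
  cases L <;> rfl

theorem lcpLen_nil_right {A : Type*} [DecidableEq A] (L : List A) : lcpLen L [] = 0 := by
  cases L <;> rfl

theorem lcpLen_cons_cons {A : Type*} [DecidableEq A] (a b : A) (as bs : List A) :
    lcpLen (a :: as) (b :: bs) = if a = b then lcpLen as bs + 1 else 0 := rfl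

theorem cut_head {w : List HexGen} {B : List HexGen} {T : List (List HexGen)}
    (h : cutAux false [] w = B :: T) : B.head? = w.head? := by
  rcases w with _ | ⟨x, xs⟩
  · simp [cutAux] at h
  by_cases hx : x.1 = false
  · rw [cutA_cons_a hx] at h
    injection h with h1 _
    rw [← h1]
    rfl
  · have hx' : x.1 = true := by
      cases hb : x.1
      · exact absurd hb hx
      · rfl
    rw [cutA_cons_b hx'] at h
    rcases hc : cutAux false [] xs with _ | ⟨B0, T0⟩
    · rw [hc] at h
      simp at h
    · rw [hc] at h
      injection h with h1 _
      rw [← h1]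
      rfl

theorem lcp_cut_zero {w w' : List HexGen}
    (h : ∀ a b : HexGen, w.head? = some a → w'.head? = some b → a ≠ b) :
    lcpLen (cutAux false [] w) (cutAux false [] w') = 0 := by
  rcases hc : cutAux false [] w with _ | ⟨B, T⟩
  · exact lcpLen_nil_left _
  rcases hc' : cutAux false [] w' with _ | ⟨B', T'⟩
  · exact lcpLen_nil_right _
  rcases w with _ | ⟨a, ws⟩
  · simp [cutAux] at hc
  rcases w' with _ | ⟨b, ws'⟩
  · simp [cutAux] at hc'
  have h1 : B.head? = some a := cut_head hc
  have h2 : B'.head? = some b := cut_head hc'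
  rw [lcpLen_cons_cons, if_neg]
  intro hBB
  apply h a b rfl rfl
  rw [hBB, h2] at h1
  exact (Option.some_injective _ h1).symm

theorem lcp_mh_cons (x : HexGen) (X Y : List (List HexGen)) :
    lcpLen (X.modifyHead (x :: ·)) (Y.modifyHead (x :: ·)) = lcpLen X Y := by
  cases X with
  | nil => rw [List.modifyHead]; rw [lcpLen_nil_left, lcpLen_nil_left]
  | cons B T =>
    cases Y with
    | nil => rw [List.modifyHead]; rw [lcpLen_nil_right, lcpLen_nil_right]
    | cons B' T' =>
      show lcpLen ((x :: B) :: T) ((x :: B') :: T') = _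
      rw [lcpLen_cons_cons, lcpLen_cons_cons]
      by_cases hBB : B = B'
      · rw [if_pos hBB, if_pos (by rw [hBB])]
      · rw [if_neg hBB, if_neg (fun hh => hBB (by injection hh))]

end HexAux
namespace HexAux

theorem head_q {x : HexGen} {w : List HexGen} (h : HNormal (x :: w)) :
    ∀ a ∈ w.head?, Q x a := (List.isChain_cons.mp h).1

/-- The core cancellation lemma: prepending the reverse of a normal word `u` to a normal
word `u'` and normalizing, the number of A-letters that cancel is exactly twice the
number of common initial blocks. -/
theorem core : ∀ u : List HexGen, HNormal u → ∀ u' : List HexGen, HNormal u' →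
    cnt false (N (u.reverse ++ u')) + 2 * lcpLen (cutAux false [] u) (cutAux false [] u')
      = cnt false u + cnt false u' := by
  intro u
  induction u with
  | nil =>
    intro _ u' hu'
    rw [List.reverse_nil, List.nil_append, N_of_normal hu']
    rw [show cutAux false [] ([] : List HexGen) = [] from rfl, lcpLen_nil_left]
    rw [cnt_nil]
    omega
  | cons x r ih =>
    intro hu u' hu'
    have hr : HNormal r := hu.tail
    have hN : N ((x :: r).reverse ++ u') = N (r.reverse ++ insL x u') := by
      rw [N, N]
      congr 1
      apply NF_congr
      rw [List.reverse_cons, List.append_assoc]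
      simp [evalWord_append, eval_insL, evalWord_cons, mul_assoc]
    have IH := ih hr (insL x u') (insL_normal x u' hu')
    rw [hN]
    obtain ⟨c, m⟩ := x
    cases c
    · -- x is an A-letter a_m
      rcases u' with _ | ⟨⟨c', j⟩, t'⟩
      · -- u' = []
        have hins : insL ((false, m) : HexGen) [] = [((false, m) : HexGen)] := rfl
        rw [hins] at IH ⊢
        have hl1 : lcpLen (cutAux false [] ((false, m) :: r)) (cutAux false [] ([] : List HexGen))
            = 0 := by
          rw [show cutAux false [] ([] : List HexGen) = [] from rfl, lcpLen_nil_right]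
        have hl2 : lcpLen (cutAux false [] r) (cutAux false [] [((false, m) : HexGen)]) = 0 := by
          apply lcp_cut_zero
          intro a b ha hb
          simp at hb
          subst hb
          intro hab
          exact ((head_q hu a ha).1) (by rw [hab])
        rw [hl2] at IH
        rw [hl1]
        simp only [cnt_cons, cnt_append, cnt_nil] at IH ⊢
        simp at IH ⊢
        omega
      · cases c'
        · by_cases hj : j = m
          · -- cancellation of a_m
            subst hj
            have hins : insL ((false, j) : HexGen) ((false, j) :: t') = t' := by
              simp
            rw [hins] at IH ⊢
            rw [cutA_cons_a rfl, cutA_cons_a rfl, lcpLen_cons_cons, if_pos rfl]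
            simp only [cnt_cons, cnt_append, cnt_nil] at IH ⊢
            simp at IH ⊢
            omega
          · -- insertion of a_m in front
            have hins : insL ((false, m) : HexGen) ((false, j) :: t')
                = (false, m) :: (false, j) :: t' := by
              simp [insA_ne hj]
            rw [hins] at IH ⊢
            have hl1 : lcpLen (cutAux false [] ((false, m) :: r))
                (cutAux false [] ((false, j) :: t')) = 0 := by
              apply lcp_cut_zero
              intro a b ha hb
              simp at ha hb
              subst ha; subst hb
              intro hab
              injection hab with _ h2
              exact hj h2.symm
            have hl2 : lcpLen (cutAux false [] r)
                (cutAux false [] ((false, m) :: (false, j) :: t')) = 0 := by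
              apply lcp_cut_zero
              intro a b ha hb
              simp at hb
              subst hb
              intro hab
              exact ((head_q hu a ha).1) (by rw [hab])
            rw [hl2] at IH
            rw [hl1]
            simp only [cnt_cons, cnt_append, cnt_nil] at IH ⊢
            simp at IH ⊢
            omega
        · -- u' starts with a B-letter
          have hins : insL ((false, m) : HexGen) ((true, j) :: t')
              = (false, m) :: (true, j) :: t' := rfl
          rw [hins] at IH ⊢
          have hl1 : lcpLen (cutAux false [] ((false, m) :: r))
              (cutAux false [] ((true, j) :: t')) = 0 := by
            apply lcp_cut_zero
            intro a b ha hb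
            simp at ha hb
            subst ha; subst hb
            intro hab
            injection hab with h1 _
            simp at h1
          have hl2 : lcpLen (cutAux false [] r)
              (cutAux false [] ((false, m) :: (true, j) :: t')) = 0 := by
            apply lcp_cut_zero
            intro a b ha hb
            simp at hb
            subst hb
            intro hab
            exact ((head_q hu a ha).1) (by rw [hab])
          rw [hl2] at IH
          rw [hl1]
          simp only [cnt_cons, cnt_append, cnt_nil] at IH ⊢
          simp at IH ⊢
          omega
    · -- x is a B-letter b_m
      have hlb : insL ((true, m) : HexGen) u' = insB m u' := rfl
      rw [hlb] at IH ⊢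
      rcases insB_spec m u' with ⟨α, t, hw, hα, hins⟩ | ⟨α, t, hw, hα, hins, hlast⟩
      · -- deletion of a b_m from u'
        subst hw
        rw [hins] at IH ⊢
        rcases α with _ | ⟨y, α₂⟩
        · -- the b_m is at the head of u'
          simp only [List.nil_append] at IH ⊢
          rw [cutA_cons_b rfl, cutA_cons_b rfl, lcp_mh_cons]
          simp only [cnt_cons, cnt_append, cnt_nil] at IH ⊢
          simp at IH ⊢
          omega
        · -- u' starts with a commuting A-run
          have hy := hα y (List.mem_cons_self)
          have hl1 : lcpLen (cutAux false [] ((true, m) :: r))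
              (cutAux false [] ((y :: α₂) ++ (true, m) :: t)) = 0 := by
            apply lcp_cut_zero
            intro a b ha hb
            simp at ha hb
            subst ha; subst hb
            intro hab
            rw [← hab] at hy
            simp at hy
          have hl2 : lcpLen (cutAux false [] r)
              (cutAux false [] ((y :: α₂) ++ t)) = 0 := by
            apply lcp_cut_zero
            intro a b ha hb
            simp at hb
            subst hb
            have hq := head_q hu a ha
            intro hab
            subst hab
            rcases hy with ⟨hy1, hy2⟩
            exact hy2 (hq.2 rfl hy1).symm
          rw [hl2] at IH
          rw [hl1]
          rw [List.cons_append] at IH ⊢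
          simp only [cnt_cons, cnt_append, cnt_nil] at IH ⊢
          simp at IH ⊢
          omega
      · -- insertion of b_m into u'
        subst hw
        rw [hins] at IH ⊢
        rcases α with _ | ⟨y, α₂⟩
        · -- b_m goes in front
          simp only [List.nil_append] at IH ⊢
          have hl1 : lcpLen (cutAux false [] ((true, m) :: r)) (cutAux false [] t) = 0 := by
            rcases hlast with rfl | ⟨z, t₂, rfl, hz1, hz2⟩
            · rw [show cutAux false [] ([] : List HexGen) = [] from rfl, lcpLen_nil_right]
            · apply lcp_cut_zero
              intro a b ha hb
              simp at ha hb
              subst ha; subst hb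
              intro hab
              exact hz2 hab.symm
          have hl2 : lcpLen (cutAux false [] r) (cutAux false [] ((true, m) :: t)) = 0 := by
            apply lcp_cut_zero
            intro a b ha hb
            simp at hb
            subst hb
            intro hab
            exact ((head_q hu a ha).1) (by rw [hab])
          rw [hl2] at IH
          rw [hl1]
          simp only [cnt_cons, cnt_append, cnt_nil] at IH ⊢
          simp at IH ⊢
          omega
        · -- u' starts with a commuting A-run
          have hy := hα y (List.mem_cons_self)
          have hl1 : lcpLen (cutAux false [] ((true, m) :: r))
              (cutAux false [] ((y :: α₂) ++ t)) = 0 := by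
            apply lcp_cut_zero
            intro a b ha hb
            simp at ha hb
            subst ha; subst hb
            intro hab
            rw [← hab] at hy
            simp at hy
          have hl2 : lcpLen (cutAux false [] r)
              (cutAux false [] ((y :: α₂) ++ (true, m) :: t)) = 0 := by
            apply lcp_cut_zero
            intro a b ha hb
            simp at hb
            subst hb
            have hq := head_q hu a ha
            intro hab
            subst hab
            rcases hy with ⟨hy1, hy2⟩
            exact hy2 (hq.2 rfl hy1).symm
          rw [hl2] at IH
          rw [hl1]
          rw [List.cons_append] at IH ⊢
          simp only [cnt_cons, cnt_append, cnt_nil] at IH ⊢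
          simp at IH ⊢
          omega

end HexAux
namespace HexAux

/-- The A ↔ B swap on generators. -/
def conjG (x : HexGen) : HexGen := (!x.1, x.2)

theorem conjG_conjG (x : HexGen) : conjG (conjG x) = x := by
  obtain ⟨c, m⟩ := x
  simp [conjG]

theorem conjG_inj : Function.Injective conjG := fun a b h => by
  rw [← conjG_conjG a, h, conjG_conjG]

theorem psi_check : ∀ r ∈ hexRels,
    FreeGroup.lift (fun x => (PresentedGroup.of (conjG x) : Hex)) r = 1 := by
  intro r hr
  rcases hr with ⟨x, rfl⟩ | ⟨k, l, hkl, rfl⟩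
  · rw [map_mul, FreeGroup.lift_apply_of]
    exact of_mul_self (conjG x)
  · rw [map_mul, map_mul, map_mul, map_inv, map_inv, FreeGroup.lift_apply_of, FreeGroup.lift_apply_of]
    exact comm_helper (of_comm (Ne.symm hkl)).symm

/-- The A ↔ B swap automorphism of `Hex`. -/
noncomputable def psi : Hex →* Hex := PresentedGroup.toGroup psi_check

theorem psi_of (x : HexGen) : psi (PresentedGroup.of x) = PresentedGroup.of (conjG x) := by
  unfold psi
  exact PresentedGroup.toGroup.of psi_check

theorem eval_map_conj (w : List HexGen) : evalWord (w.map conjG) = psi (evalWord w) := by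
  induction w with
  | nil => rw [List.map_nil, evalWord_nil, map_one]
  | cons x t ih => rw [List.map_cons, evalWord_cons, evalWord_cons, map_mul, psi_of, ih]

theorem psi_psi_eval (v : List HexGen) : psi (psi (evalWord v)) = evalWord v := by
  rw [← eval_map_conj, ← eval_map_conj, List.map_map,
    show conjG ∘ conjG = id from funext conjG_conjG, List.map_id]

theorem isALeft_map {w : List HexGen} (h : IsBLeft w) : IsALeft (w.map conjG) := by
  intro s k l hkl hp
  obtain ⟨h1, h2⟩ := hp
  rw [List.getElem?_map] at h1 h2
  have e1 : w[s]? = some (false, l) := by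
    rcases hx : w[s]? with _ | a
    · rw [hx] at h1; simp at h1
    · rw [hx] at h1
      simp only [Option.map_some] at h1
      have := congrArg conjG (Option.some_injective _ h1)
      rw [conjG_conjG] at this
      rw [this]
      rfl
  have e2 : w[s + 1]? = some (true, k) := by
    rcases hx : w[s + 1]? with _ | a
    · rw [hx] at h2; simp at h2
    · rw [hx] at h2
      simp only [Option.map_some] at h2
      have := congrArg conjG (Option.some_injective _ h2)
      rw [conjG_conjG] at this
      rw [this]
      rfl
  exact h s l k (Ne.symm hkl) ⟨e1, e2⟩

theorem isALeft_tail {x : HexGen} {w : List HexGen} (h : IsALeft (x :: w)) : IsALeft w := by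
  intro s k l hkl hp
  exact h (s + 1) k l hkl ⟨by simpa using hp.1, by simpa using hp.2⟩

theorem hnormal_of {w : List HexGen} (h1 : List.Chain' (· ≠ ·) w) (h2 : IsALeft w) :
    HNormal w := by
  induction w with
  | nil => exact List.isChain_nil
  | cons x t ih =>
    refine List.isChain_cons.mpr ⟨?_, ih (List.isChain_cons.mp h1).2 (isALeft_tail h2)⟩
    intro y hy
    refine ⟨(List.isChain_cons.mp h1).1 y hy, ?_⟩
    rcases t with _ | ⟨z, t₂⟩
    · simp at hy
    have hzy : z = y := by simpa using hy
    subst hzy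
    obtain ⟨cx, mx⟩ := x
    obtain ⟨cz, my⟩ := z
    intro hx hy'
    simp only at hx hy'
    subst hx
    subst hy'
    by_contra hne
    exact h2 0 my mx (fun hmm => hne hmm.symm) ⟨by simp, by simp⟩

theorem chain_ne_map {w : List HexGen} (h : List.Chain' (· ≠ ·) w) :
    List.Chain' (· ≠ ·) (w.map conjG) := by
  refine (List.isChain_map conjG).mpr ?_
  exact h.imp fun a b hab hc => hab (conjG_inj hc)

theorem no_repeat {w : List HexGen} (h : ¬List.Chain' (· ≠ ·) w) :
    ∃ (p : List HexGen) (x : HexGen) (q : List HexGen), w = p ++ x :: x :: q := by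
  induction w with
  | nil => exact absurd List.isChain_nil h
  | cons x t ih =>
    by_cases hch : List.Chain' (· ≠ ·) t
    · have hhead : ¬∀ y ∈ t.head?, x ≠ y := by
        intro hy
        exact h (List.isChain_cons.mpr ⟨hy, hch⟩)
      push_neg at hhead
      obtain ⟨y, hy, hxy⟩ := hhead
      rcases t with _ | ⟨z, t₂⟩
      · simp at hy
      simp only [List.head?_cons, Option.mem_def, Option.some.injEq] at hy
      subst hy
      subst hxy
      exact ⟨[], x, t₂, rfl⟩
    · obtain ⟨p, y, q, rfl⟩ := ih hch
      exact ⟨x :: p, y, q, rfl⟩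

theorem geo_chain {g : Hex} {w : List HexGen} (hg : IsGeodesicWord g w) :
    List.Chain' (· ≠ ·) w := by
  by_contra h
  obtain ⟨p, x, q, rfl⟩ := no_repeat h
  have hxx : evalWord (x :: x :: q) = evalWord q := by
    rw [evalWord_cons, evalWord_cons, ← mul_assoc, of_mul_self, one_mul]
  have heval : evalWord (p ++ q) = g := by
    rw [evalWord_append, ← hxx, ← evalWord_append, hg.1]
  have hle := hg.2 (p ++ q) heval
  simp only [List.length_append, List.length_cons] at hle
  omega

theorem cnt_map_conj (p : Bool) (w : List HexGen) : cnt p (w.map conjG) = cnt (!p) w := by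
  induction w with
  | nil => rfl
  | cons y t ih =>
    rw [List.map_cons, cnt_cons, cnt_cons, ih]
    congr 1
    obtain ⟨c, m⟩ := y
    cases c <;> cases p <;> rfl

theorem cut_conj (w : List HexGen) : ∀ cur,
    cutAux false (cur.map conjG) (w.map conjG) = (cutAux true cur w).map (List.map conjG) := by
  induction w with
  | nil => intro cur; rfl
  | cons x xs ih =>
    intro cur
    by_cases hx : x.1 = true
    · have hcx : (conjG x).1 = false := by simp [conjG, hx]
      simp only [List.map_cons, cutAux, if_pos hx, if_pos hcx]
      rw [show (cur.map conjG ++ [conjG x]) = (cur ++ [x]).map conjG by simp]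
      congr 1
      simpa using ih []
    · have hxf : x.1 = false := by
        cases hb : x.1
        · rfl
        · exact absurd hb hx
      have hcx : ¬(conjG x).1 = false := by simp [conjG, hxf]
      simp only [List.map_cons, cutAux, if_neg hx, if_neg hcx]
      rw [show (cur.map conjG ++ [conjG x]) = (cur ++ [x]).map conjG by simp]
      exact ih (cur ++ [x])

theorem cut_conj_top (w : List HexGen) :
    cutAux false [] (w.map conjG) = (cutAux true [] w).map (List.map conjG) := by
  have := cut_conj w []
  simpa using this

theorem lcp_map {A B : Type*} [DecidableEq A] [DecidableEq B] (f : A → B)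
    (hf : Function.Injective f) : ∀ X Y : List A, lcpLen (X.map f) (Y.map f) = lcpLen X Y := by
  intro X
  induction X with
  | nil => intro Y; rw [List.map_nil, lcpLen_nil_left, lcpLen_nil_left]
  | cons x xs ih =>
    intro Y
    rcases Y with _ | ⟨y, ys⟩
    · rw [List.map_nil, lcpLen_nil_right, lcpLen_nil_right]
    rw [List.map_cons, List.map_cons, lcpLen_cons_cons, lcpLen_cons_cons]
    by_cases hxy : x = y
    · rw [if_pos hxy, if_pos (by rw [hxy]), ih]
    · rw [if_neg hxy, if_neg (fun hh => hxy (hf hh))]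

end HexAux
open HexAux in
/-- the map F = F_A × F_B : G → T_W × T_W is an isometric embedding, i.e.
for all g, g' and all a-left / b-left representations of them, the ℓ¹ distance between the
associated pairs of sentences (blocks cut after each A-letter, resp. B-letter) equals the
word distance d_G(g,g'). -/
theorem stmt_15 (g g' : Hex) (wa wa' wb wb' : List HexGen)
    (hga : IsGeodesicWord g wa) (hal : IsALeft wa)
    (hga' : IsGeodesicWord g' wa') (hal' : IsALeft wa')
    (hgb : IsGeodesicWord g wb) (hbl : IsBLeft wb)
    (hgb' : IsGeodesicWord g' wb') (hbl' : IsBLeft wb') :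
    treeDist (cutAux false [] wa) (cutAux false [] wa')
      + treeDist (cutAux true [] wb) (cutAux true [] wb')
      = wordDist g g' := by
  classical
  have hna : HNormal wa := hnormal_of (geo_chain hga) hal
  have hna' : HNormal wa' := hnormal_of (geo_chain hga') hal'
  have hnb : HNormal (wb.map conjG) := hnormal_of (chain_ne_map (geo_chain hgb)) (isALeft_map hbl)
  have hnb' : HNormal (wb'.map conjG) :=
    hnormal_of (chain_ne_map (geo_chain hgb')) (isALeft_map hbl')
  have hevalA : evalWord (wa.reverse ++ wa') = g⁻¹ * g' := by
    rw [evalWord_append, evalWord_reverse, hga.1, hga'.1]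
  have hevalB : evalWord ((wb.map conjG).reverse ++ wb'.map conjG) = psi (g⁻¹ * g') := by
    rw [evalWord_append, evalWord_reverse, eval_map_conj, eval_map_conj, hgb.1, hgb'.1,
      map_mul, map_inv]
  have coreA := core wa hna wa' hna'
  have coreB := core (wb.map conjG) hnb (wb'.map conjG) hnb'
  rw [cut_conj_top, cut_conj_top, lcp_map (List.map conjG) (List.map_injective_iff.mpr conjG_inj),
    cnt_map_conj, cnt_map_conj] at coreB
  simp only [Bool.not_false] at coreB
  have e1 : evalWord (N (wa.reverse ++ wa')) = g⁻¹ * g' := (eval_N _).trans hevalA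
  have e2 : evalWord (N ((wb.map conjG).reverse ++ wb'.map conjG)) = psi (g⁻¹ * g') :=
    (eval_N _).trans hevalB
  have e3 : evalWord ((N ((wb.map conjG).reverse ++ wb'.map conjG)).map conjG) = g⁻¹ * g' := by
    rw [eval_map_conj, e2, ← hevalA, psi_psi_eval, hevalA]
  have e4 : evalWord ((N (wa.reverse ++ wa')).map conjG) = psi (g⁻¹ * g') := by
    rw [eval_map_conj, e1]
  have hmin : ∀ v w : List HexGen, evalWord w = evalWord v → (N v).length ≤ w.length := by
    intro v w h
    have hNN : N v = N w := congrArg Subtype.val (NF_congr h.symm)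
    rw [hNN]
    exact N_length_le w
  have len1 : (N (wa.reverse ++ wa')).length
      ≤ (N ((wb.map conjG).reverse ++ wb'.map conjG)).length := by
    have := hmin (wa.reverse ++ wa') ((N ((wb.map conjG).reverse ++ wb'.map conjG)).map conjG)
      (e3.trans hevalA.symm)
    simpa using this
  have len2 : (N ((wb.map conjG).reverse ++ wb'.map conjG)).length
      ≤ (N (wa.reverse ++ wa')).length := by
    have := hmin ((wb.map conjG).reverse ++ wb'.map conjG) ((N (wa.reverse ++ wa')).map conjG)
      (e4.trans hevalB.symm)
    simpa using this
  have hleq := le_antisymm len1 len2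
  have hNcb : N ((N ((wb.map conjG).reverse ++ wb'.map conjG)).map conjG)
      = N (wa.reverse ++ wa') :=
    congrArg Subtype.val (NF_congr (e3.trans hevalA.symm))
  have hlen2 : (N ((N ((wb.map conjG).reverse ++ wb'.map conjG)).map conjG)).length
      = ((N ((wb.map conjG).reverse ++ wb'.map conjG)).map conjG).length := by
    rw [hNcb, List.length_map]
    exact hleq
  have hc1 : cnt false (N (wa.reverse ++ wa'))
      = cnt true (N ((wb.map conjG).reverse ++ wb'.map conjG)) := by
    have hh := N_cnt_of_length hlen2 false
    rw [hNcb, cnt_map_conj] at hh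
    simpa using hh
  have t1 := cnt_total (N (wa.reverse ++ wa'))
  have t2 := cnt_total (N ((wb.map conjG).reverse ++ wb'.map conjG))
  have hwd : wordDist g g' = (N (wa.reverse ++ wa')).length := by
    unfold wordDist
    apply le_antisymm
    · apply Nat.sInf_le
      exact ⟨N (wa.reverse ++ wa'), rfl, e1⟩
    · refine le_csInf ⟨(N (wa.reverse ++ wa')).length, N (wa.reverse ++ wa'), rfl, e1⟩ ?_
      rintro n ⟨w, rfl, hwe⟩
      exact hmin (wa.reverse ++ wa') w (hwe.trans hevalA.symm)
  rw [hwd]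
  have ha1 : (cutAux false [] wa).length = cnt false wa := cut_length false wa []
  have ha2 : (cutAux false [] wa').length = cnt false wa' := cut_length false wa' []
  have hb1 : (cutAux true [] wb).length = cnt true wb := cut_length true wb []
  have hb2 : (cutAux true [] wb').length = cnt true wb' := cut_length true wb' []
  simp only [treeDist]
  rw [ha1, ha2, hb1, hb2]
  omega
end
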